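/- arXiv:2512.08926 — 7 statements merged into one kernel-verified Lean document; each statement's English description precedes it below -/
import Mathlib

section
/- Let N ≥ 1 and let k_1, …, k_N : (0,∞) → ℝ be locally square-integrable functions that are regularly varying at t = 0, i.e. there exist exponents H_1, …, H_N > 0, constants c_1, …, c_N ≠ 0 and slowly varying functions ℓ_1, …, ℓ_N : (0,∞) → (0,∞) such that lim_{t→0+} k_j(t) / (c_j t^{H_j − 1/2} ℓ_j(1/t)) = 1 for every j. Define the Gram matrix function G(h) with entries G_{ij}(h) = ∫_0^h k_i(r) k_j(r) dr for h > 0. If H_1, …, H_N are pairwise distinct, then liminf_{h→0+} λ_min(G(h)) / (h^{2 H_max} ℓ_min(1/h)^2) > 0, where H_max = max_{j} H_j, ℓ_min(x) = min_j ℓ_j(x), and λ_min denotes the smallest eigenvalue of the (symmetric positive semidefinite) matrix G(h). -/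
open MeasureTheory Filter Set Matrix

/-- A measurable function `ℓ`, positive on `(0,∞)`, is slowly varying at infinity if
`ℓ(λ t)/ℓ(t) → 1` as `t → ∞`, for every `λ > 0`. -/
def SlowlyVarying (ℓ : ℝ → ℝ) : Prop :=
  Measurable ℓ ∧ ∀ lam : ℝ, 0 < lam →
    Filter.Tendsto (fun t => ℓ (lam * t) / ℓ t) Filter.atTop (nhds 1)

/-- The smallest eigenvalue of a real symmetric (positive semidefinite) matrix, expressed
as the infimum of `ξᵀ M ξ` over Euclidean unit vectors `ξ`. -/
noncomputable def lambdaMin {n : Type*} [Fintype n] (M : Matrix n n ℝ) : ℝ :=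
  sInf {r : ℝ | ∃ ξ : n → ℝ, (∑ i, ξ i ^ 2) = 1 ∧ r = ξ ⬝ᵥ M.mulVec ξ}

open Topology

/-!
Argue by contradiction along a sequence `hₙ → 0⁺` and unit vectors `ξₙ` with
`ξₙᵀ G(hₙ) ξₙ = o(hₙ^{2 H_max} ℓ_min(1/hₙ)²)`. The substitution `t = hₙ s` turns the quadratic
form into `∫₀¹ (∑ⱼ βₙⱼ Kₙⱼ(s))² ds`, where `Kₙⱼ(s) → cⱼ s^{Hⱼ - 1/2}` by regular variation and
`|βₙⱼ| ≥ |ξₙⱼ|` because `h^{Hⱼ} ℓⱼ(1/h) ≥ h^{H_max} ℓ_min(1/h)` for `h ≤ 1`. Normalising `βₙ` and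
extracting a subsequence converging to some `γ` on the unit sphere, Fatou's lemma forces
`∑ⱼ γⱼ cⱼ s^{Hⱼ - 1/2} = 0` on `(0, 1]`, which contradicts Dedekind's lemma for the distinct
characters `s ↦ s^{Hⱼ - 1/2}` of the multiplicative monoid `(0, 1]`.
-/

theorem exists_seq_tendsto_forall_of_frequently {α : Type*} {l : Filter α}
    [l.IsCountablyGenerated] {p : ℕ → α → Prop} (h : ∀ n, ∃ᶠ a in l, p n a) :
    ∃ x : ℕ → α, Tendsto x atTop l ∧ ∀ n, p n (x n) := by
  obtain ⟨s, hs⟩ := l.exists_antitone_basis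
  choose x hx using fun n => ((h n).and_eventually (hs.mem n)).exists
  exact ⟨x, hs.tendsto fun n => (hx n).2, fun n => (hx n).1⟩

theorem le_lambdaMin {n : Type*} [Fintype n] [Nonempty n] {M : Matrix n n ℝ} {r : ℝ}
    (h : ∀ ξ : n → ℝ, ∑ i, ξ i ^ 2 = 1 → r ≤ ξ ⬝ᵥ M *ᵥ ξ) : r ≤ lambdaMin M := by
  classical
  exact le_csInf ⟨_, Pi.single (Classical.arbitrary n) 1, by simp [Pi.single_apply], rfl⟩
    fun _ ⟨ξ, hξ, hr⟩ => hr ▸ h ξ hξ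

def iocZeroOneSubmonoid : Submonoid ℝ where
  carrier := Ioc 0 1
  mul_mem' ha hb := ⟨mul_pos ha.1 hb.1, mul_le_one₀ ha.2 hb.1.le hb.2⟩
  one_mem' := ⟨one_pos, le_rfl⟩

noncomputable def rpowMonoidHom (b : ℝ) : iocZeroOneSubmonoid →* ℝ where
  toFun s := (s : ℝ) ^ b
  map_one' := Real.one_rpow b
  map_mul' s t := Real.mul_rpow s.2.1.le t.2.1.le

theorem rpowMonoidHom_injective : Function.Injective rpowMonoidHom := by
  intro b b' hbb'
  have := DFunLike.congr_fun hbb' ⟨1 / 2, by norm_num, by norm_num⟩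
  exact (Real.rpow_right_inj (by norm_num) (by norm_num)).1 this

theorem eq_zero_of_sum_mul_rpow_eq_zero {ι : Type*} [Fintype ι] {b : ι → ℝ}
    (hb : Function.Injective b) {γ : ι → ℝ}
    (h : ∀ s ∈ Ioc (0 : ℝ) 1, ∑ j, γ j * s ^ b j = 0) : γ = 0 := by
  have hind := (linearIndependent_monoidHom iocZeroOneSubmonoid ℝ).comp _
    (rpowMonoidHom_injective.comp hb)
  funext j
  refine Fintype.linearIndependent_iff.1 hind γ ?_ j
  funext s
  simpa [rpowMonoidHom] using h s s.2

theorem eq_zero_of_ae_sum_mul_rpow_eq_zero {ι : Type*} [Fintype ι] {b : ι → ℝ}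
    (hb : Function.Injective b) {γ : ι → ℝ}
    (h : ∀ᵐ s ∂volume.restrict (Ioc (0 : ℝ) 1), ∑ j, γ j * s ^ b j = 0) : γ = 0 := by
  have hcont : ContinuousOn (fun s : ℝ => ∑ j, γ j * s ^ b j) (Ioc 0 1) :=
    continuousOn_finsetSum _ fun j _ => continuousOn_const.mul fun s hs =>
      (Real.continuousAt_rpow_const s _ (Or.inl hs.1.ne')).continuousWithinAt
  have hIoo : EqOn (fun s : ℝ => ∑ j, γ j * s ^ b j) 0 (Ioo 0 1) :=
    Measure.eqOn_open_of_ae_eq (ae_restrict_of_ae_restrict_of_subset Ioo_subset_Ioc_self h)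
      isOpen_Ioo (hcont.mono Ioo_subset_Ioc_self) continuousOn_const
  refine eq_zero_of_sum_mul_rpow_eq_zero hb fun s hs => ?_
  refine hIoo.of_subset_closure hcont continuousOn_const Ioo_subset_Ioc_self ?_ hs
  rw [closure_Ioo zero_ne_one]
  exact Ioc_subset_Icc_self

theorem eq_zero_of_ae_sum_mul_const_mul_rpow_eq_zero {ι : Type*} [Fintype ι] {b c : ι → ℝ}
    (hc : ∀ j, c j ≠ 0) (hb : Function.Injective b) {γ : ι → ℝ}
    (h : ∀ᵐ s ∂volume.restrict (Ioc (0 : ℝ) 1), ∑ j, γ j * (c j * s ^ b j) = 0) : γ = 0 := by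
  have := eq_zero_of_ae_sum_mul_rpow_eq_zero hb (γ := fun j => γ j * c j)
    (by simpa only [mul_assoc] using h)
  funext j
  simpa [hc j] using congr_fun this j

theorem ae_nonpos_of_tendsto_integral_zero {α : Type*} [MeasurableSpace α] {μ : Measure α}
    {f : ℕ → α → ℝ} {g : α → ℝ} (hf : ∀ n, Integrable (f n) μ) (hf₀ : ∀ n, 0 ≤ᵐ[μ] f n)
    (hfg : ∀ᵐ a ∂μ, Tendsto (fun n => f n a) atTop (𝓝 (g a)))
    (hlim : Tendsto (fun n => ∫ a, f n a ∂μ) atTop (𝓝 0)) : g ≤ᵐ[μ] 0 := by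
  have hlint : Tendsto (fun n => ∫⁻ a, ENNReal.ofReal (f n a) ∂μ) atTop (𝓝 0) := by
    simp_rw [← ofReal_integral_eq_lintegral_ofReal (hf _) (hf₀ _)]
    simpa using ENNReal.tendsto_ofReal hlim
  have hzero : ∫⁻ a, ENNReal.ofReal (g a) ∂μ = 0 := by
    refine le_antisymm ?_ bot_le
    calc ∫⁻ a, ENNReal.ofReal (g a) ∂μ
        = ∫⁻ a, liminf (fun n => ENNReal.ofReal (f n a)) atTop ∂μ :=
          lintegral_congr_ae <| hfg.mono fun a ha =>
            ((ENNReal.continuous_ofReal.tendsto _).comp ha).liminf_eq.symm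
      _ ≤ liminf (fun n => ∫⁻ a, ENNReal.ofReal (f n a) ∂μ) atTop :=
          lintegral_liminf_le' fun n => (hf n).aemeasurable.ennreal_ofReal
      _ = 0 := hlint.liminf_eq
  have hg : AEMeasurable g μ :=
    aemeasurable_of_tendsto_metrizable_ae' (fun n => (hf n).aemeasurable) hfg
  filter_upwards [(lintegral_eq_zero_iff' hg.ennreal_ofReal).1 hzero] with a ha
  simpa using ha

theorem not_tendsto_integral_sq_sum_zero {α ι : Type*} [MeasurableSpace α] [Fintype ι]
    {μ : Measure α} {φ : ι → α → ℝ}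
    (hφ : ∀ γ : ι → ℝ, (∀ᵐ a ∂μ, ∑ j, γ j * φ j a = 0) → γ = 0)
    {β : ℕ → EuclideanSpace ℝ ι} {K : ℕ → ι → α → ℝ} {ε : ℝ} (hε : 0 < ε)
    (hβ : ∀ n, ε ≤ ‖β n‖) (hK : ∀ᵐ a ∂μ, ∀ j, Tendsto (fun n => K n j a) atTop (𝓝 (φ j a)))
    (hint : ∀ n, Integrable (fun a => (∑ j, β n j * K n j a) ^ 2) μ) :
    ¬ Tendsto (fun n => ∫ a, (∑ j, β n j * K n j a) ^ 2 ∂μ) atTop (𝓝 0) := by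
  intro hlim
  have hβ₀ : ∀ n, 0 < ‖β n‖ := fun n => hε.trans_le (hβ n)
  obtain ⟨γ, hγ, ψ, hψ, hγlim⟩ := (isCompact_sphere (0 : EuclideanSpace ℝ ι) 1).tendsto_subseq
    (x := fun n => ‖β n‖⁻¹ • β n) fun n => by simp [norm_smul, (hβ₀ n).ne']
  have hsq : (fun a => (∑ j, γ j * φ j a) ^ 2) ≤ᵐ[μ] 0 := by
    refine ae_nonpos_of_tendsto_integral_zero
      (f := fun n a => (‖β (ψ n)‖⁻¹) ^ 2 * (∑ j, β (ψ n) j * K (ψ n) j a) ^ 2)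
      (fun n => (hint _).const_mul _) (fun n => ae_of_all _ fun a => by positivity) ?_ ?_
    · filter_upwards [hK] with a ha
      have hcoord : ∀ j, Tendsto (fun n => ‖β (ψ n)‖⁻¹ * β (ψ n) j) atTop (𝓝 (γ j)) :=
        fun j => (((PiLp.continuous_apply 2 _ j).tendsto γ).comp hγlim).congr fun n => by simp
      refine ((tendsto_finsetSum Finset.univ fun j _ =>
        (hcoord j).mul ((ha j).comp hψ.tendsto_atTop)).pow 2).congr fun n => ?_
      rw [← mul_pow, Finset.mul_sum]
      simp_rw [mul_assoc]
      rfl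
    · have hI : Tendsto (fun n => ∫ a, (∑ j, β (ψ n) j * K (ψ n) j a) ^ 2 ∂μ) atTop (𝓝 0) :=
        hlim.comp hψ.tendsto_atTop
      refine squeeze_zero (fun n => by positivity) (fun n => ?_)
        (by simpa using hI.const_mul (ε⁻¹ ^ 2))
      rw [integral_const_mul]
      gcongr
      exact hβ _
  have hγ₀ : γ = 0 := by
    have := hφ (γ ·) <| hsq.mono fun a ha =>
      pow_eq_zero_iff two_ne_zero |>.1 (le_antisymm ha (sq_nonneg _))
    ext j
    simpa using congr_fun this j
  simp [hγ₀] at hγ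

theorem aestronglyMeasurable_of_sq_of_pos_mul {α : Type*} [MeasurableSpace α]
    {μ : Measure α} {f : α → ℝ} {e : ℝ}
    (hsq : AEStronglyMeasurable (fun a => f a ^ 2) μ) (hpos : ∀ᵐ a ∂μ, 0 < e * f a) :
    AEStronglyMeasurable f μ := by
  refine ((Real.continuous_sqrt.comp_aestronglyMeasurable hsq).const_mul (|e| / e)).congr ?_
  filter_upwards [hpos] with a ha
  have he : e ≠ 0 := by rintro rfl; simp at ha
  rw [Real.sqrt_sq_eq_abs, div_mul_eq_mul_div, ← abs_mul, abs_of_pos ha,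
    mul_div_cancel_left₀ _ he]

section RegularVariation

variable {k ℓ : ℝ → ℝ} {c H : ℝ}

theorem eventually_pos_mul_of_tendsto_div (hℓ : ∀ x, 0 < x → 0 < ℓ x)
    (hk : Tendsto (fun t => k t / (c * t ^ (H - 1 / 2) * ℓ (1 / t))) (𝓝[>] 0) (𝓝 1)) :
    ∀ᶠ t in 𝓝[>] 0, 0 < c * k t := by
  filter_upwards [hk.eventually (lt_mem_nhds one_pos), self_mem_nhdsWithin] with t ht ht₀
  have hp : 0 < t ^ (H - 1 / 2) := Real.rpow_pos_of_pos ht₀ _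
  have hl : 0 < ℓ (1 / t) := hℓ _ (one_div_pos.2 ht₀)
  have hc : c ≠ 0 := by rintro rfl; simp at ht
  have hck : c * k t =
      k t / (c * t ^ (H - 1 / 2) * ℓ (1 / t)) * (c ^ 2 * (t ^ (H - 1 / 2) * ℓ (1 / t))) := by
    rw [div_mul_eq_mul_div, eq_div_iff (mul_ne_zero (mul_ne_zero hc hp.ne') hl.ne')]
    ring
  rw [hck]
  positivity

theorem eventually_memLp_two (hℓ : ∀ x, 0 < x → 0 < ℓ x)
    (hloc : ∀ T, 0 < T → IntegrableOn (fun t => k t ^ 2) (Ioc 0 T))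
    (hk : Tendsto (fun t => k t / (c * t ^ (H - 1 / 2) * ℓ (1 / t))) (𝓝[>] 0) (𝓝 1)) :
    ∀ᶠ h in 𝓝[>] 0, MemLp k 2 (volume.restrict (Ioc 0 h)) := by
  -- `k` is not assumed measurable; near `0` it has the sign of `c`, so it is `± √(k ^ 2)`.
  obtain ⟨δ, hδ, hsign⟩ := (nhdsGT_basis (0 : ℝ)).eventually_iff.1
    (eventually_pos_mul_of_tendsto_div hℓ hk)
  filter_upwards [Ioo_mem_nhdsGT hδ] with h hh
  have hmeas : AEStronglyMeasurable k (volume.restrict (Ioc 0 h)) :=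
    aestronglyMeasurable_of_sq_of_pos_mul (hloc h hh.1).aestronglyMeasurable <|
      (ae_restrict_iff' measurableSet_Ioc).2 <| ae_of_all _ fun t ht =>
        hsign ⟨ht.1, ht.2.trans_lt hh.2⟩
  exact (memLp_two_iff_integrable_sq hmeas).2 (hloc h hh.1)

theorem tendsto_comp_mul_div_rpow_mul (hℓ : ∀ x, 0 < x → 0 < ℓ x)
    (hℓsv : SlowlyVarying ℓ) (hc : c ≠ 0)
    (hk : Tendsto (fun t => k t / (c * t ^ (H - 1 / 2) * ℓ (1 / t))) (𝓝[>] 0) (𝓝 1))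
    {s : ℝ} (hs : 0 < s) :
    Tendsto (fun h => k (h * s) / (h ^ (H - 1 / 2) * ℓ (1 / h))) (𝓝[>] 0)
      (𝓝 (c * s ^ (H - 1 / 2))) := by
  have hmul : Tendsto (fun h => h * s) (𝓝[>] 0) (𝓝[>] 0) :=
    tendsto_nhdsWithin_of_tendsto_nhds_of_eventually_within _
      (((continuous_mul_const s).tendsto' 0 0 (zero_mul s)).mono_left nhdsWithin_le_nhds)
      (eventually_nhdsWithin_of_forall fun h (hh : 0 < h) => mul_pos hh hs)
  have hslow : Tendsto (fun h => ℓ (s⁻¹ * h⁻¹) / ℓ h⁻¹) (𝓝[>] 0) (𝓝 1) :=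
    (hℓsv.2 s⁻¹ (inv_pos.2 hs)).comp tendsto_inv_nhdsGT_zero
  have := ((hk.comp hmul).mul_const (c * s ^ (H - 1 / 2))).mul hslow
  rw [one_mul, mul_one] at this
  refine this.congr' ?_
  filter_upwards [self_mem_nhdsWithin] with h (hh : 0 < h)
  have hp : 0 < h ^ (H - 1 / 2) := Real.rpow_pos_of_pos hh _
  have hq : 0 < s ^ (H - 1 / 2) := Real.rpow_pos_of_pos hs _
  have hl : 0 < ℓ (1 / h) := hℓ _ (by positivity)
  have hl' : 0 < ℓ (1 / (h * s)) := hℓ _ (by positivity)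
  rw [Function.comp_apply, ← one_div, ← one_div, ← one_div_mul_one_div, mul_comm (1 / s),
    Real.mul_rpow hh.le hs.le]
  field_simp

end RegularVariation

theorem dotProduct_mulVec_gram {α ι : Type*} [MeasurableSpace α] [Fintype ι] {μ : Measure α}
    {f : ι → α → ℝ} (hf : ∀ i, MemLp (f i) 2 μ) (ξ : ι → ℝ) :
    ξ ⬝ᵥ (of fun i j => ∫ a, f i a * f j a ∂μ) *ᵥ ξ = ∫ a, (∑ i, ξ i * f i a) ^ 2 ∂μ := by
  have hint : ∀ i j, Integrable (fun a => ξ i * ξ j * (f i a * f j a)) μ :=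
    fun i j => ((hf i).integrable_mul (hf j)).const_mul _
  calc ξ ⬝ᵥ (of fun i j => ∫ a, f i a * f j a ∂μ) *ᵥ ξ
      = ∑ i, ∑ j, ∫ a, ξ i * ξ j * (f i a * f j a) ∂μ := by
        simp only [dotProduct, mulVec, of_apply, Finset.mul_sum, integral_const_mul]
        exact Finset.sum_congr rfl fun i _ => Finset.sum_congr rfl fun j _ => by ring
    _ = ∫ a, ∑ i, ∑ j, ξ i * ξ j * (f i a * f j a) ∂μ := by
        rw [integral_finsetSum _ fun i _ => integrable_finsetSum _ fun j _ => hint i j]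
        exact Finset.sum_congr rfl fun i _ => (integral_finsetSum _ fun j _ => hint i j).symm
    _ = ∫ a, (∑ i, ξ i * f i a) ^ 2 ∂μ := by
        simp_rw [sq, Finset.sum_mul_sum]
        exact integral_congr_ae <| ae_of_all _ fun a =>
          Finset.sum_congr rfl fun i _ => Finset.sum_congr rfl fun j _ => by ring

theorem integrableOn_Ioc_comp_mul_left {g : ℝ → ℝ} {h : ℝ} (hh : 0 < h)
    (hg : IntegrableOn g (Ioc 0 h)) : IntegrableOn (fun s => g (h * s)) (Ioc 0 1) := by
  have := ((intervalIntegrable_iff_integrableOn_Ioc_of_le hh.le).2 hg).comp_mul_left (c := h)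
  rwa [zero_div, div_self hh.ne', intervalIntegrable_iff_integrableOn_Ioc_of_le zero_le_one]
    at this

theorem integral_Ioc_comp_mul_left (g : ℝ → ℝ) {h : ℝ} (hh : 0 < h) :
    ∫ s in Ioc 0 1, g (h * s) = h⁻¹ * ∫ r in Ioc 0 h, g r := by
  rw [← intervalIntegral.integral_of_le zero_le_one, ← intervalIntegral.integral_of_le hh.le,
    intervalIntegral.integral_comp_mul_left _ hh.ne']
  simp

theorem integrableOn_Ioc_sq_sum_comp_mul {ι : Type*} [Fintype ι] {k : ι → ℝ → ℝ} {h : ℝ}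
    (hh : 0 < h) (hk : ∀ j, MemLp (k j) 2 (volume.restrict (Ioc 0 h))) (ξ : ι → ℝ) :
    IntegrableOn (fun s => (∑ j, ξ j * k j (h * s)) ^ 2) (Ioc 0 1) :=
  integrableOn_Ioc_comp_mul_left hh
    (memLp_finsetSum _ fun j _ => (hk j).const_mul (ξ j)).integrable_sq

theorem mul_integral_Ioc_sq_sum_comp_mul {ι : Type*} [Fintype ι] {k : ι → ℝ → ℝ} {h : ℝ}
    (hh : 0 < h) (hk : ∀ j, MemLp (k j) 2 (volume.restrict (Ioc 0 h))) (ξ : ι → ℝ) :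
    h * ∫ s in Ioc 0 1, (∑ j, ξ j * k j (h * s)) ^ 2 =
      ξ ⬝ᵥ (of fun i j => ∫ r in Ioc 0 h, k i r * k j r) *ᵥ ξ := by
  rw [integral_Ioc_comp_mul_left (fun r => (∑ j, ξ j * k j r) ^ 2) hh,
    mul_inv_cancel_left₀ hh.ne', dotProduct_mulVec_gram hk]

theorem rpow_two_mul_eq_mul_sq {h : ℝ} (hh : 0 < h) (M : ℝ) :
    h ^ (2 * M) = h * (h ^ (M - 1 / 2)) ^ 2 := by
  calc h ^ (2 * M) = h ^ (1 + (M - 1 / 2) * (2 : ℕ)) := by push_cast; ring_nf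
    _ = h * (h ^ (M - 1 / 2)) ^ 2 := by
      rw [Real.rpow_add hh, Real.rpow_one, Real.rpow_mul_natCast hh.le]

section GramMatrix

variable {ι : Type*} [Fintype ι] {k ℓ : ι → ℝ → ℝ} {H c : ι → ℝ} {M : ℝ} {L : ℝ → ℝ}

theorem not_tendsto_quadForm_gram_div (hc : ∀ j, c j ≠ 0)
    (hℓ : ∀ j, ∀ x : ℝ, 0 < x → 0 < ℓ j x) (hℓsv : ∀ j, SlowlyVarying (ℓ j))
    (hreg : ∀ j, Tendsto (fun t => k j t / (c j * t ^ (H j - 1 / 2) * ℓ j (1 / t)))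
      (𝓝[>] 0) (𝓝 1))
    (hdist : Function.Injective H) (hM : ∀ j, H j ≤ M)
    (hL : ∀ h : ℝ, 0 < h → 0 < L h ∧ ∀ j, L h ≤ ℓ j (1 / h))
    {h : ℕ → ℝ} (hlim : Tendsto h atTop (𝓝[>] 0)) (hh : ∀ n, h n ∈ Ioc 0 1)
    (hk : ∀ n j, MemLp (k j) 2 (volume.restrict (Ioc 0 (h n))))
    {ξ : ℕ → ι → ℝ} (hξ : ∀ n, ∑ j, ξ n j ^ 2 = 1) :
    ¬ Tendsto (fun n => ξ n ⬝ᵥ (of fun i j => ∫ r in Ioc 0 (h n), k i r * k j r) *ᵥ ξ n /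
      (h n ^ (2 * M) * L (h n) ^ 2)) atTop (𝓝 0) := by
  set a : ℕ → ℝ := fun n => h n ^ (M - 1 / 2) * L (h n)
  set p : ℕ → ι → ℝ := fun n j => h n ^ (H j - 1 / 2) * ℓ j (1 / h n)
  have ha : ∀ n, 0 < a n := fun n => mul_pos (Real.rpow_pos_of_pos (hh n).1 _) (hL _ (hh n).1).1
  have hp : ∀ n j, a n ≤ p n j := fun n j =>
    mul_le_mul (Real.rpow_le_rpow_of_exponent_ge (hh n).1 (hh n).2 (by linarith [hM j]))
      ((hL _ (hh n).1).2 j) (hL _ (hh n).1).1.le (Real.rpow_pos_of_pos (hh n).1 _).le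
  set β : ℕ → EuclideanSpace ℝ ι := fun n => WithLp.toLp 2 fun j => ξ n j * p n j / a n
  set K : ℕ → ι → ℝ → ℝ := fun n j s => k j (h n * s) / p n j
  have hβK : ∀ n s,
      (∑ j, β n j * K n j s) ^ 2 = (∑ j, ξ n j * k j (h n * s)) ^ 2 / a n ^ 2 := by
    intro n s
    rw [← div_pow, Finset.sum_div]
    congr 1
    refine Finset.sum_congr rfl fun j _ => ?_
    have := (ha n).trans_le (hp n j)
    simp only [β, K]
    field_simp
  have hβ : ∀ n, 1 ≤ ‖β n‖ := by
    intro n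
    rw [EuclideanSpace.norm_eq, Real.one_le_sqrt, ← hξ n]
    refine Finset.sum_le_sum fun j _ => ?_
    rw [Real.norm_eq_abs, sq_abs]
    change ξ n j ^ 2 ≤ (ξ n j * p n j / a n) ^ 2
    rw [mul_div_assoc, mul_pow]
    exact le_mul_of_one_le_right (sq_nonneg _) (one_le_pow₀ ((one_le_div (ha n)).2 (hp n j)))
  have hK : ∀ᵐ s ∂volume.restrict (Ioc (0 : ℝ) 1), ∀ j,
      Tendsto (fun n => K n j s) atTop (𝓝 (c j * s ^ (H j - 1 / 2))) :=
    (ae_restrict_iff' measurableSet_Ioc).2 <| ae_of_all _ fun s hs j =>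
      (tendsto_comp_mul_div_rpow_mul (hℓ j) (hℓsv j) (hc j) (hreg j) hs.1).comp hlim
  intro hQ
  refine not_tendsto_integral_sq_sum_zero
    (fun γ => eq_zero_of_ae_sum_mul_const_mul_rpow_eq_zero hc (sub_left_injective.comp hdist))
    one_pos hβ hK (fun n => ?_) (hQ.congr fun n => ?_)
  · simp_rw [hβK]
    exact (integrableOn_Ioc_sq_sum_comp_mul (hh n).1 (hk n) (ξ n)).div_const _
  · simp_rw [hβK, integral_div, ← mul_integral_Ioc_sq_sum_comp_mul (hh n).1 (hk n) (ξ n)]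
    rw [rpow_two_mul_eq_mul_sq (hh n).1, mul_assoc, mul_div_mul_left _ _ (hh n).1.ne', mul_pow]

theorem exists_pos_eventually_le_quadForm_gram_div (hc : ∀ j, c j ≠ 0)
    (hℓ : ∀ j, ∀ x : ℝ, 0 < x → 0 < ℓ j x) (hℓsv : ∀ j, SlowlyVarying (ℓ j))
    (hloc : ∀ j, ∀ T : ℝ, 0 < T → IntegrableOn (fun t => (k j t) ^ 2) (Ioc 0 T))
    (hreg : ∀ j, Tendsto (fun t => k j t / (c j * t ^ (H j - 1 / 2) * ℓ j (1 / t)))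
      (𝓝[>] 0) (𝓝 1))
    (hdist : Function.Injective H) (hM : ∀ j, H j ≤ M)
    (hL : ∀ h : ℝ, 0 < h → 0 < L h ∧ ∀ j, L h ≤ ℓ j (1 / h)) :
    ∃ C > 0, ∀ᶠ h in 𝓝[>] 0, ∀ ξ : ι → ℝ, ∑ j, ξ j ^ 2 = 1 →
      C ≤ ξ ⬝ᵥ (of fun i j => ∫ r in Ioc 0 h, k i r * k j r) *ᵥ ξ / (h ^ (2 * M) * L h ^ 2) := by
  have hIoc : ∀ᶠ h in 𝓝[>] (0 : ℝ), h ∈ Ioc 0 1 := Ioc_mem_nhdsGT one_pos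
  have hgood : ∀ᶠ h in 𝓝[>] 0, h ∈ Ioc 0 1 ∧ ∀ j, MemLp (k j) 2 (volume.restrict (Ioc 0 h)) :=
    hIoc.and (eventually_all.2 fun j => eventually_memLp_two (hℓ j) (hloc j) (hreg j))
  by_contra! hcon
  obtain ⟨h, hlim, hh⟩ := exists_seq_tendsto_forall_of_frequently fun n : ℕ =>
    (hcon (1 / (n + 1)) Nat.one_div_pos_of_nat).and_eventually hgood
  choose hξ hh₁ hk using hh
  choose ξ hξ hlt using hξ
  refine not_tendsto_quadForm_gram_div hc hℓ hℓsv hreg hdist hM hL hlim hh₁ hk hξ <|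
    squeeze_zero (fun n => div_nonneg ?_ ?_) (fun n => (hlt n).le)
      tendsto_one_div_add_atTop_nhds_zero_nat
  · rw [← mul_integral_Ioc_sq_sum_comp_mul (hh₁ n).1 (hk n) (ξ n)]
    exact mul_nonneg (hh₁ n).1.le (integral_nonneg fun s => sq_nonneg _)
  · exact mul_nonneg (Real.rpow_nonneg (hh₁ n).1.le _) (sq_nonneg _)

end GramMatrix

theorem stmt0_general (N : ℕ)
    (k : Fin (N + 1) → ℝ → ℝ) (H : Fin (N + 1) → ℝ) (c : Fin (N + 1) → ℝ)
    (ℓ : Fin (N + 1) → ℝ → ℝ)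
    (hc : ∀ j, c j ≠ 0)
    (hℓpos : ∀ j, ∀ x : ℝ, 0 < x → 0 < ℓ j x)
    (hℓsv : ∀ j, SlowlyVarying (ℓ j))
    (hloc : ∀ j, ∀ T : ℝ, 0 < T → IntegrableOn (fun t => (k j t) ^ 2) (Ioc 0 T))
    (hreg : ∀ j, Tendsto
      (fun t => k j t / (c j * t ^ (H j - 1 / 2) * ℓ j (1 / t)))
      (nhdsWithin 0 (Ioi 0)) (nhds 1))
    (hdist : Function.Injective H) :
    ∃ C > 0, ∀ᶠ h in nhdsWithin (0 : ℝ) (Ioi 0),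
      C ≤ lambdaMin (Matrix.of fun i j : Fin (N + 1) => ∫ r in Ioc 0 h, k i r * k j r) /
          (h ^ (2 * Finset.univ.sup' Finset.univ_nonempty H) *
            (Finset.univ.inf' Finset.univ_nonempty fun j => ℓ j (1 / h)) ^ 2) := by
  have hL : ∀ h : ℝ, 0 < h → 0 < Finset.univ.inf' Finset.univ_nonempty (fun j => ℓ j (1 / h)) ∧
      ∀ j, Finset.univ.inf' Finset.univ_nonempty (fun j => ℓ j (1 / h)) ≤ ℓ j (1 / h) :=
    fun h hh => ⟨(Finset.lt_inf'_iff _).2 fun j _ => hℓpos j _ (one_div_pos.2 hh),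
      fun j => Finset.inf'_le _ (Finset.mem_univ j)⟩
  obtain ⟨C, hC, hev⟩ := exists_pos_eventually_le_quadForm_gram_div hc hℓpos hℓsv hloc hreg hdist
    (M := Finset.univ.sup' Finset.univ_nonempty H) (fun j => Finset.le_sup' H (Finset.mem_univ j))
    hL
  refine ⟨C, hC, (hev.and self_mem_nhdsWithin).mono fun h ⟨hξ, (hh : 0 < h)⟩ => ?_⟩
  have hD : 0 < h ^ (2 * Finset.univ.sup' Finset.univ_nonempty H) *
      (Finset.univ.inf' Finset.univ_nonempty fun j => ℓ j (1 / h)) ^ 2 :=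
    mul_pos (Real.rpow_pos_of_pos hh _) (pow_pos (hL h hh).1 2)
  rw [le_div_iff₀ hD]
  exact le_lambdaMin fun ξ hξ₁ => (le_div_iff₀ hD).1 (hξ ξ hξ₁)

/-- lower asymptotics of the smallest eigenvalue of the Gram matrix of
regularly varying kernels with pairwise distinct indices.  The conclusion
`liminf_{h→0+} λ_min(G(h)) / (h^{2 H_max} ℓ_min(1/h)²) > 0` is expressed equivalently as:
there is `C > 0` such that eventually, as `h → 0+`,
`C ≤ λ_min(G(h)) / (h^{2 H_max} ℓ_min(1/h)²)`. -/
theorem stmt0 (N : ℕ)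
    (k : Fin (N + 1) → ℝ → ℝ) (H : Fin (N + 1) → ℝ) (c : Fin (N + 1) → ℝ)
    (ℓ : Fin (N + 1) → ℝ → ℝ)
    (hH : ∀ j, 0 < H j) (hc : ∀ j, c j ≠ 0)
    (hℓpos : ∀ j, ∀ x : ℝ, 0 < x → 0 < ℓ j x)
    (hℓsv : ∀ j, SlowlyVarying (ℓ j))
    (hloc : ∀ j, ∀ T : ℝ, 0 < T → IntegrableOn (fun t => (k j t) ^ 2) (Ioc 0 T))
    (hreg : ∀ j, Tendsto
      (fun t => k j t / (c j * t ^ (H j - 1 / 2) * ℓ j (1 / t)))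
      (nhdsWithin 0 (Ioi 0)) (nhds 1))
    (hdist : Function.Injective H) :
    ∃ C > 0, ∀ᶠ h in nhdsWithin (0 : ℝ) (Ioi 0),
      C ≤ lambdaMin (Matrix.of fun i j : Fin (N + 1) => ∫ r in Ioc 0 h, k i r * k j r) /
          (h ^ (2 * Finset.univ.sup' Finset.univ_nonempty H) *
            (Finset.univ.inf' Finset.univ_nonempty fun j => ℓ j (1 / h)) ^ 2) :=
  stmt0_general N k H c ℓ hc hℓpos hℓsv hloc hreg hdist
end

section
/- Let k ∈ C¹((0,∞)) be locally square-integrable on [0,∞) and regularly varying at t = 0 with index ρ < 1, i.e. k(t) = t^ρ ℓ(1/t) for t > 0 with ℓ : (0,∞) → (0,∞) slowly varying. Assume k' is monotone on some right-neighborhood of 0, and that there exist β ≥ 0, h₀ ∈ (0,1) and C > 0 such that |k(t u)/k(t)| ≤ C u^β for all t ∈ (0, h₀] and u ≥ 1. Let α ∈ (β, 1) and define k̃(t) = ∫_0^∞ (k(t+z) − k(t)) e^{−z} z^{−1−α} dz for t > 0. Then this integral converges absolutely for every t > 0, and lim_{t→0+} k̃(t)/(t^{−α} k(t)) = ∫_0^∞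 ((1+u)^ρ − 1) u^{−1−α} du. -/
/-!
Substituting `z = u t` turns `k̃(t) / (t^{-α} k(t))` into
`∫_0^∞ (k((1+u)t)/k(t) - 1) e^{-ut} u^{-1-α} du`, whose integrand tends to
`((1+u)^ρ - 1) u^{-1-α}` by regular variation. Dominated convergence applies with the majorant
`A u^{-α}` on `(0,1]` and `B u^{β-1-α}` on `(1,∞)`, integrable because `β < α < 1`. The bound at
infinity is the scaling hypothesis. The bound near `0` is where monotonicity of `k'` enters: it
makes `k` convex or concave near `0`, so the slope of `k` on `[t, (1+u)t]` lies between its slopes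
on `[t/2, t]` and `[t, 2t]`, and by positivity of `k` these are `O(k(t)/t)` as soon as `k(t/2)` and
`k(2t)` are `O(k(t))`, which follows from regular variation and from the scaling bound.
-/

open MeasureTheory Filter Set

open Topology

noncomputable def rpowMajorant (α β A B u : ℝ) : ℝ :=
  if u ≤ 1 then A * u ^ (-α) else B * u ^ (β - 1 - α)

theorem integrableOn_rpowMajorant {α β : ℝ} (A B : ℝ) (hα : α < 1) (hβα : β < α) :
    IntegrableOn (rpowMajorant α β A B) (Ioi 0) := by
  have h₁ : IntegrableOn (fun u : ℝ => A * u ^ (-α)) (Ioc 0 1) :=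
    ((intervalIntegrable_iff_integrableOn_Ioc_of_le zero_le_one).1
      (intervalIntegral.intervalIntegrable_rpow' (by linarith))).const_mul A
  have h₂ : IntegrableOn (fun u : ℝ => B * u ^ (β - 1 - α)) (Ioi 1) :=
    (integrableOn_Ioi_rpow_of_lt (by linarith) one_pos).const_mul B
  rw [← Ioc_union_Ioi_eq_Ioi zero_le_one]
  exact ((integrableOn_congr_fun (fun u hu => if_pos hu.2) measurableSet_Ioc).2 h₁).union
    ((integrableOn_congr_fun (fun u hu => if_neg (not_le.2 hu)) measurableSet_Ioi).2 h₂)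

theorem norm_mul_mul_rpow_le_rpowMajorant {α β A B u y e : ℝ} (hu : 0 < u) (he : |e| ≤ 1)
    (h₁ : u ≤ 1 → |y| ≤ A * u) (h₂ : 1 < u → |y| ≤ B * u ^ β) :
    ‖y * e * u ^ (-1 - α)‖ ≤ rpowMajorant α β A B u := by
  have hye : |y * e| ≤ |y| := by
    rw [abs_mul]; exact mul_le_of_le_one_right (abs_nonneg y) he
  rw [Real.norm_eq_abs, abs_mul, abs_of_pos (Real.rpow_pos_of_pos hu _), rpowMajorant]
  split_ifs with h
  · calc |y * e| * u ^ (-1 - α) ≤ A * u * u ^ (-1 - α) := by gcongr; exact hye.trans (h₁ h)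
      _ = A * u ^ (-α) := by
        rw [mul_assoc, show -α = 1 + (-1 - α) by ring, Real.rpow_add hu, Real.rpow_one]
  · calc |y * e| * u ^ (-1 - α) ≤ B * u ^ β * u ^ (-1 - α) := by
          gcongr; exact hye.trans (h₂ (not_le.1 h))
      _ = B * u ^ (β - 1 - α) := by
        rw [mul_assoc, ← Real.rpow_add hu]; ring_nf

theorem abs_exp_neg_le_one {x : ℝ} (hx : 0 ≤ x) : |Real.exp (-x)| ≤ 1 := by
  rw [abs_of_pos (Real.exp_pos _), Real.exp_le_one_iff]
  linarith

theorem integral_Ioi_mul_rpow_comp_mul_right (F : ℝ → ℝ) (α : ℝ) {t : ℝ} (ht : 0 < t) :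
    ∫ z in Ioi 0, F z * z ^ (-1 - α) = t ^ (-α) * ∫ u in Ioi 0, F (u * t) * u ^ (-1 - α) := by
  have h := integral_comp_mul_right_Ioi (fun z => F z * z ^ (-1 - α)) 0 ht
  have hscaled : ∫ u in Ioi 0, F (u * t) * (u * t) ^ (-1 - α) =
      t ^ (-1 - α) * ∫ u in Ioi 0, F (u * t) * u ^ (-1 - α) := by
    rw [← integral_const_mul]
    refine setIntegral_congr_fun measurableSet_Ioi fun u (hu : 0 < u) => ?_
    rw [Real.mul_rpow hu.le ht.le]
    ring
  rw [zero_mul, smul_eq_mul, hscaled] at h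
  rw [show -α = 1 + (-1 - α) by ring, Real.rpow_add ht, Real.rpow_one, mul_assoc, h,
    mul_inv_cancel_left₀ ht.ne']

theorem integral_sub_mul_exp_mul_rpow_div {f : ℝ → ℝ} (α : ℝ) {t : ℝ} (ht : 0 < t)
    (hft : f t ≠ 0) :
    (∫ z in Ioi 0, (f (t + z) - f t) * Real.exp (-z) * z ^ (-1 - α)) / (t ^ (-α) * f t) =
      ∫ u in Ioi 0, (f ((1 + u) * t) / f t - 1) * Real.exp (-(u * t)) * u ^ (-1 - α) := by
  rw [integral_Ioi_mul_rpow_comp_mul_right (fun z => (f (t + z) - f t) * Real.exp (-z)) α ht,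
    mul_div_mul_left _ _ (Real.rpow_pos_of_pos ht _).ne', ← integral_div]
  congr 1
  funext u
  rw [show t + u * t = (1 + u) * t by ring]
  field_simp

theorem convexOn_or_concaveOn_of_monotoneOn_or_antitoneOn_deriv {f : ℝ → ℝ} {δ : ℝ}
    (hf : DifferentiableOn ℝ f (Ioi 0))
    (h : MonotoneOn (deriv f) (Ioc 0 δ) ∨ AntitoneOn (deriv f) (Ioc 0 δ)) :
    ConvexOn ℝ (Ioc 0 δ) f ∨ ConcaveOn ℝ (Ioc 0 δ) f := by
  have hcont : ContinuousOn f (Ioc 0 δ) := hf.continuousOn.mono Ioc_subset_Ioi_self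
  have hdiff : DifferentiableOn ℝ f (interior (Ioc 0 δ)) :=
    hf.mono (by rw [interior_Ioc]; exact Ioo_subset_Ioi_self)
  exact h.imp
    (fun h => (h.mono interior_subset).convexOn_of_deriv (convex_Ioc 0 δ) hcont hdiff)
    (fun h => (h.mono interior_subset).concaveOn_of_deriv (convex_Ioc 0 δ) hcont hdiff)

theorem abs_slope_le_max_of_convexOn_or_concaveOn {D : Set ℝ} {f : ℝ → ℝ}
    (hf : ConvexOn ℝ D f ∨ ConcaveOn ℝ D f) {a s x b : ℝ} (ha : a ∈ D) (hs : s ∈ D) (hx : x ∈ D)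
    (hb : b ∈ D) (has : a < s) (hsx : s < x) (hxb : x ≤ b) :
    |(f x - f s) / (x - s)| ≤ max |(f a - f s) / (a - s)| |(f b - f s) / (b - s)| := by
  rcases hf with hf | hf
  · exact abs_le_max_abs_abs (hf.secant_mono hs ha hx has.ne hsx.ne' (has.trans hsx).le)
      (hf.secant_mono hs hx hb hsx.ne' (hsx.trans_le hxb).ne' hxb)
  · have h₁ := hf.neg.secant_mono hs ha hx has.ne hsx.ne' (has.trans hsx).le
    have h₂ := hf.neg.secant_mono hs hx hb hsx.ne' (hsx.trans_le hxb).ne' hxb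
    simp only [Pi.neg_apply, neg_sub_neg, ← neg_sub _ (f s), neg_div, neg_le_neg_iff] at h₁ h₂
    rw [max_comm]
    exact abs_le_max_abs_abs h₂ h₁

theorem abs_sub_le_of_convexOn_or_concaveOn {D : Set ℝ} {f : ℝ → ℝ}
    (hf : ConvexOn ℝ D f ∨ ConcaveOn ℝ D f) {t x K L : ℝ} (ht : 0 < t)
    (hD : Icc (t / 2) (2 * t) ⊆ D) (hnonneg : ∀ y ∈ Icc (t / 2) (2 * t), 0 ≤ f y)
    (hK : f (t / 2) ≤ K * f t) (hL : f (2 * t) ≤ L * f t) (hx : x ∈ Ioc t (2 * t)) :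
    |f x - f t| ≤ (2 * K + L + 3) * f t * ((x - t) / t) := by
  obtain ⟨htx, hx2⟩ := hx
  have hmem : ∀ y, t / 2 ≤ y → y ≤ 2 * t → y ∈ Icc (t / 2) (2 * t) := fun y h₁ h₂ => ⟨h₁, h₂⟩
  have hslope := abs_slope_le_max_of_convexOn_or_concaveOn hf
    (hD (hmem _ le_rfl (by linarith))) (hD (hmem t (by linarith) (by linarith)))
    (hD (hmem x (by linarith) hx2)) (hD (hmem _ (by linarith) le_rfl)) (by linarith) htx hx2
  have f_half := hnonneg _ (hmem _ le_rfl (by linarith))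
  have f_t := hnonneg t (hmem t (by linarith) (by linarith))
  have f_two := hnonneg _ (hmem _ (by linarith) le_rfl)
  have hA : |f (t / 2) - f t| ≤ (K + 1) * f t := abs_sub_le_iff.2 ⟨by linarith, by linarith⟩
  have hB : |f (2 * t) - f t| ≤ (L + 1) * f t := abs_sub_le_iff.2 ⟨by linarith, by linarith⟩
  have hleft : |(f (t / 2) - f t) / (t / 2 - t)| ≤ (2 * K + L + 3) * f t / t := by
    rw [abs_div, abs_of_neg (by linarith : t / 2 - t < 0), div_le_div_iff₀ (by linarith) ht]
    nlinarith [mul_le_mul_of_nonneg_right hA ht.le]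
  have hright : |(f (2 * t) - f t) / (2 * t - t)| ≤ (2 * K + L + 3) * f t / t := by
    rw [abs_div, abs_of_pos (by linarith : 0 < 2 * t - t), div_le_div_iff₀ (by linarith) ht]
    nlinarith [mul_le_mul_of_nonneg_right hB ht.le]
  have hxt : 0 < x - t := by linarith
  calc |f x - f t| = |(f x - f t) / (x - t)| * (x - t) := by
        rw [abs_div, abs_of_pos hxt, div_mul_cancel₀ _ hxt.ne']
    _ ≤ (2 * K + L + 3) * f t / t * (x - t) := by
        gcongr; exact hslope.trans (max_le hleft hright)
    _ = (2 * K + L + 3) * f t * ((x - t) / t) := by ring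

theorem eventually_abs_div_sub_one_le_of_convexOn_or_concaveOn {f : ℝ → ℝ} {δ K L : ℝ}
    (hδ : 0 < δ) (hf : ConvexOn ℝ (Ioc 0 δ) f ∨ ConcaveOn ℝ (Ioc 0 δ) f)
    (hpos : ∀ t, 0 < t → 0 < f t) (hK : ∀ᶠ t in 𝓝[>] 0, f (t / 2) ≤ K * f t)
    (hL : ∀ᶠ t in 𝓝[>] 0, f (2 * t) ≤ L * f t) :
    ∀ᶠ t in 𝓝[>] 0, ∀ u ∈ Ioc (0 : ℝ) 1, |f ((1 + u) * t) / f t - 1| ≤ (2 * K + L + 3) * u := by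
  filter_upwards [hK, hL, Ioo_mem_nhdsGT (half_pos hδ)] with t htK htL ht u hu
  have hft := hpos t ht.1
  have hD : Icc (t / 2) (2 * t) ⊆ Ioc 0 δ := fun y hy =>
    ⟨by linarith [hy.1, ht.1], by linarith [hy.2, ht.2]⟩
  have h := abs_sub_le_of_convexOn_or_concaveOn (x := (1 + u) * t) hf ht.1 hD
    (fun y hy => (hpos y (hD hy).1).le) htK htL
    ⟨by nlinarith [hu.1, ht.1], by nlinarith [hu.2, ht.1]⟩
  rw [show (1 + u) * t - t = u * t by ring, mul_div_cancel_right₀ _ ht.1.ne'] at h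
  rw [div_sub_one hft.ne', abs_div, abs_of_pos hft, div_le_iff₀ hft]
  linarith

theorem eventually_le_mul_of_tendsto_div {f g : ℝ → ℝ} {l : Filter ℝ} {a : ℝ}
    (hf : ∀ᶠ t in l, 0 < f t) (h : Tendsto (fun t => g t / f t) l (𝓝 a)) :
    ∀ᶠ t in l, g t ≤ (a + 1) * f t := by
  filter_upwards [hf, h.eventually (eventually_le_nhds (lt_add_one a))] with t ht hlt
  rwa [div_le_iff₀ ht] at hlt

theorem tendsto_div_of_eq_rpow_mul_slowlyVarying {k ℓ : ℝ → ℝ} {ρ : ℝ}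
    (hℓpos : ∀ x : ℝ, 0 < x → 0 < ℓ x) (hℓsv : SlowlyVarying ℓ)
    (hreg : ∀ t : ℝ, 0 < t → k t = t ^ ρ * ℓ (1 / t)) {c : ℝ} (hc : 0 < c) :
    Tendsto (fun t => k (c * t) / k t) (𝓝[>] 0) (𝓝 (c ^ ρ)) := by
  have h := ((hℓsv.2 c⁻¹ (inv_pos.2 hc)).comp tendsto_inv_nhdsGT_zero).const_mul (c ^ ρ)
  rw [mul_one] at h
  refine h.congr' ?_
  filter_upwards [self_mem_nhdsWithin] with t (ht : 0 < t)
  have hℓ : ℓ t⁻¹ ≠ 0 := (hℓpos _ (inv_pos.2 ht)).ne'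
  have htρ : t ^ ρ ≠ 0 := (Real.rpow_pos_of_pos ht ρ).ne'
  rw [Function.comp_apply, hreg _ (mul_pos hc ht), hreg t ht, Real.mul_rpow hc.le ht.le, one_div,
    one_div, mul_inv]
  field_simp

theorem le_mul_rpow_div_mul_of_abs_div_le {k : ℝ → ℝ} {h₀ C β : ℝ}
    (hkpos : ∀ t, 0 < t → 0 < k t)
    (hscale : ∀ t ∈ Ioc (0 : ℝ) h₀, ∀ u : ℝ, 1 ≤ u → |k (t * u) / k t| ≤ C * u ^ β)
    {t w : ℝ} (ht : t ∈ Ioc 0 h₀) (htw : t ≤ w) : k w ≤ C * (w / t) ^ β * k t := by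
  have h := (le_abs_self _).trans (hscale t ht (w / t) ((one_le_div ht.1).2 htw))
  rwa [mul_div_cancel₀ _ ht.1.ne', div_le_iff₀ (hkpos t ht.1)] at h

theorem eventually_abs_div_sub_one_le_rpow {k : ℝ → ℝ} {h₀ C β : ℝ} (hβ : 0 ≤ β) (hC : 0 ≤ C)
    (hh₀ : 0 < h₀)
    (hscale : ∀ t ∈ Ioc (0 : ℝ) h₀, ∀ u : ℝ, 1 ≤ u → |k (t * u) / k t| ≤ C * u ^ β) :
    ∀ᶠ t in 𝓝[>] 0, ∀ u, 1 < u → |k ((1 + u) * t) / k t - 1| ≤ (C * 2 ^ β + 1) * u ^ β := by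
  filter_upwards [Ioc_mem_nhdsGT hh₀] with t ht u hu
  have hratio := hscale t ht (1 + u) (by linarith)
  rw [mul_comm t] at hratio
  have hpow : (1 + u) ^ β ≤ 2 ^ β * u ^ β := by
    rw [← Real.mul_rpow zero_le_two (by linarith)]
    exact Real.rpow_le_rpow (by linarith) (by linarith) hβ
  have hone : 1 ≤ u ^ β := Real.one_le_rpow hu.le hβ
  calc |k ((1 + u) * t) / k t - 1| ≤ |k ((1 + u) * t) / k t| + 1 := by
        simpa using abs_sub (k ((1 + u) * t) / k t) 1
    _ ≤ C * (2 ^ β * u ^ β) + u ^ β := by gcongr; exact hratio.trans (by gcongr)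
    _ = (C * 2 ^ β + 1) * u ^ β := by ring

theorem abs_sub_le_mul_rpow_of_abs_div_le {k : ℝ → ℝ} {h₀ C β : ℝ} (hβ : 0 ≤ β) (hC : 0 ≤ C)
    (hh₀ : h₀ ∈ Ioo (0 : ℝ) 1) (hkpos : ∀ t, 0 < t → 0 < k t)
    (hscale : ∀ t ∈ Ioc (0 : ℝ) h₀, ∀ u : ℝ, 1 ≤ u → |k (t * u) / k t| ≤ C * u ^ β)
    {t z : ℝ} (ht : 0 < t) (hz : 1 < z) :
    |k (t + z) - k t| ≤ (C * ((t + 1) / h₀) ^ β * k h₀ + k t) * z ^ β := by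
  obtain ⟨hh₀pos, hh₀one⟩ := hh₀
  have hgrowth := le_mul_rpow_div_mul_of_abs_div_le hkpos hscale ⟨hh₀pos, le_rfl⟩
    (show h₀ ≤ t + z by linarith)
  have hpow : ((t + z) / h₀) ^ β ≤ ((t + 1) / h₀) ^ β * z ^ β := by
    rw [← Real.mul_rpow (by positivity) (by linarith)]
    refine Real.rpow_le_rpow (by positivity) ?_ hβ
    rw [div_mul_eq_mul_div]
    gcongr
    nlinarith
  have hktz := hkpos (t + z) (by linarith)
  have hkt := hkpos t ht
  have hone : 1 ≤ z ^ β := Real.one_le_rpow hz.le hβ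
  calc |k (t + z) - k t| ≤ k (t + z) + k t := abs_sub_le_iff.2 ⟨by linarith, by linarith⟩
    _ ≤ C * (((t + 1) / h₀) ^ β * z ^ β) * k h₀ + k t * z ^ β := by
        gcongr
        · exact hgrowth.trans (by gcongr; exact (hkpos h₀ hh₀pos).le)
        · exact le_mul_of_one_le_right hkt.le hone
    _ = (C * ((t + 1) / h₀) ^ β * k h₀ + k t) * z ^ β := by ring

theorem integrableOn_sub_mul_exp_mul_rpow {f : ℝ → ℝ} {t α β B : ℝ} (ht : 0 < t)
    (hα : α < 1) (hβα : β < α) (hf : ContDiffOn ℝ 1 f (Ioi 0))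
    (hgrowth : ∀ z, 1 < z → |f (t + z) - f t| ≤ B * z ^ β) :
    IntegrableOn (fun z => (f (t + z) - f t) * Real.exp (-z) * z ^ (-1 - α)) (Ioi 0) := by
  have hsub : Icc t (t + 1) ⊆ Ioi 0 := fun x hx => ht.trans_le hx.1
  obtain ⟨A, hA⟩ :=
    (hf.mono hsub).exists_lipschitzOnWith one_ne_zero (convex_Icc _ _) isCompact_Icc
  have hcont : ContinuousOn (fun z => (f (t + z) - f t) * Real.exp (-z) * z ^ (-1 - α))
      (Ioi 0) := by
    refine (((hf.continuousOn.comp (continuousOn_const.add continuousOn_id) fun z hz => ?_).sub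
      continuousOn_const).mul (Real.continuous_exp.comp continuous_neg).continuousOn).mul
      (continuousOn_id.rpow_const fun z hz => Or.inl (ne_of_gt hz))
    exact add_pos ht hz
  refine (integrableOn_rpowMajorant A B hα hβα).mono'
    (hcont.aestronglyMeasurable measurableSet_Ioi)
    ((ae_restrict_iff' measurableSet_Ioi).2 (Eventually.of_forall fun z (hz : 0 < z) => ?_))
  refine norm_mul_mul_rpow_le_rpowMajorant hz (abs_exp_neg_le_one hz.le) (fun hz1 => ?_)
    (hgrowth z)
  have h := hA.dist_le_mul (t + z) ⟨by linarith, by linarith⟩ t ⟨le_rfl, by linarith⟩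
  rwa [Real.dist_eq, Real.dist_eq, add_sub_cancel_left, abs_of_pos hz] at h

theorem tendsto_integral_div_sub_one_mul_exp_mul_rpow {f : ℝ → ℝ} {ρ α β A B : ℝ}
    (hα : α < 1) (hβα : β < α) (hf : ContinuousOn f (Ioi 0))
    (hlim : ∀ c, 0 < c → Tendsto (fun t => f (c * t) / f t) (𝓝[>] 0) (𝓝 (c ^ ρ)))
    (hnear : ∀ᶠ t in 𝓝[>] 0, ∀ u ∈ Ioc (0 : ℝ) 1, |f ((1 + u) * t) / f t - 1| ≤ A * u)
    (hfar : ∀ᶠ t in 𝓝[>] 0, ∀ u, 1 < u → |f ((1 + u) * t) / f t - 1| ≤ B * u ^ β) :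
    Tendsto
      (fun t => ∫ u in Ioi 0, (f ((1 + u) * t) / f t - 1) * Real.exp (-(u * t)) * u ^ (-1 - α))
      (𝓝[>] 0) (𝓝 (∫ u in Ioi 0, ((1 + u) ^ ρ - 1) * u ^ (-1 - α))) := by
  refine tendsto_integral_filter_of_dominated_convergence (rpowMajorant α β A B) ?_ ?_
    (integrableOn_rpowMajorant A B hα hβα) ?_
  · filter_upwards [self_mem_nhdsWithin] with t (ht : 0 < t)
    refine ContinuousOn.aestronglyMeasurable ?_ measurableSet_Ioi
    refine ((((hf.comp ((continuousOn_const.add continuousOn_id).mul continuousOn_const)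
      fun u hu => ?_).div_const _).sub continuousOn_const).mul
      (Real.continuous_exp.comp (continuous_id.mul continuous_const).neg).continuousOn).mul
      (continuousOn_id.rpow_const fun u hu => Or.inl (ne_of_gt hu))
    exact mul_pos (add_pos one_pos hu) ht
  · filter_upwards [hnear, hfar, self_mem_nhdsWithin] with t htnear htfar (ht : 0 < t)
    refine (ae_restrict_iff' measurableSet_Ioi).2 (Eventually.of_forall fun u (hu : 0 < u) => ?_)
    exact norm_mul_mul_rpow_le_rpowMajorant hu (abs_exp_neg_le_one (mul_pos hu ht).le)
      (fun hu1 => htnear u ⟨hu, hu1⟩) (htfar u)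
  · refine (ae_restrict_iff' measurableSet_Ioi).2 (Eventually.of_forall fun u (hu : 0 < u) => ?_)
    have hexp : Tendsto (fun t => Real.exp (-(u * t))) (𝓝[>] 0) (𝓝 1) :=
      ((Real.continuous_exp.comp (continuous_const.mul continuous_id).neg).tendsto' 0 1
        (by simp)).mono_left nhdsWithin_le_nhds
    simpa using (((hlim (1 + u) (by linarith)).sub_const 1).mul hexp).mul_const (u ^ (-1 - α))

theorem stmt2_general (k : ℝ → ℝ) (ρ : ℝ) (ℓ : ℝ → ℝ) (β h₀ C α : ℝ)
    (hk_smooth : ContDiffOn ℝ 1 k (Ioi 0))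
    (hℓpos : ∀ x : ℝ, 0 < x → 0 < ℓ x) (hℓsv : SlowlyVarying ℓ)
    (hreg : ∀ t : ℝ, 0 < t → k t = t ^ ρ * ℓ (1 / t))
    (hmono : ∃ δ > 0, MonotoneOn (deriv k) (Ioc 0 δ) ∨ AntitoneOn (deriv k) (Ioc 0 δ))
    (hβ : 0 ≤ β) (hh₀ : h₀ ∈ Ioo (0 : ℝ) 1) (hC : 0 < C)
    (hscale : ∀ t ∈ Ioc (0 : ℝ) h₀, ∀ u : ℝ, 1 ≤ u → |k (t * u) / k t| ≤ C * u ^ β)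
    (hα : α ∈ Ioo β 1) :
    (∀ t : ℝ, 0 < t →
      IntegrableOn (fun z => (k (t + z) - k t) * Real.exp (-z) * z ^ (-1 - α)) (Ioi 0)) ∧
    Tendsto
      (fun t => (∫ z in Ioi (0 : ℝ), (k (t + z) - k t) * Real.exp (-z) * z ^ (-1 - α)) /
        (t ^ (-α) * k t))
      (nhdsWithin 0 (Ioi 0))
      (nhds (∫ u in Ioi (0 : ℝ), ((1 + u) ^ ρ - 1) * u ^ (-1 - α))) := by
  obtain ⟨hβα, hα1⟩ := hα
  have hkpos : ∀ t : ℝ, 0 < t → 0 < k t := fun t ht => by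
    rw [hreg t ht]
    exact mul_pos (Real.rpow_pos_of_pos ht ρ) (hℓpos _ (one_div_pos.2 ht))
  have hlim := fun c (hc : 0 < c) => tendsto_div_of_eq_rpow_mul_slowlyVarying hℓpos hℓsv hreg hc
  refine ⟨fun t ht => integrableOn_sub_mul_exp_mul_rpow ht hα1 hβα hk_smooth fun z hz =>
    abs_sub_le_mul_rpow_of_abs_div_le hβ hC.le hh₀ hkpos hscale ht hz, ?_⟩
  obtain ⟨δ, hδ, hderiv⟩ := hmono
  have hconv := convexOn_or_concaveOn_of_monotoneOn_or_antitoneOn_deriv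
    (hk_smooth.differentiableOn one_ne_zero) hderiv
  have hhalf : ∀ᶠ t in 𝓝[>] 0, k (t / 2) ≤ ((2 : ℝ)⁻¹ ^ ρ + 1) * k t := by
    simpa only [div_eq_inv_mul] using eventually_le_mul_of_tendsto_div
      (eventually_nhdsWithin_of_forall (s := Ioi 0) hkpos) (hlim 2⁻¹ (by norm_num))
  have hdouble : ∀ᶠ t in 𝓝[>] 0, k (2 * t) ≤ C * 2 ^ β * k t := by
    filter_upwards [Ioc_mem_nhdsGT hh₀.1] with t ht
    have h := le_mul_rpow_div_mul_of_abs_div_le hkpos hscale ht (by linarith [ht.1] : t ≤ 2 * t)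
    rwa [mul_div_cancel_right₀ _ ht.1.ne'] at h
  refine (tendsto_integral_div_sub_one_mul_exp_mul_rpow hα1 hβα hk_smooth.continuousOn hlim
    (eventually_abs_div_sub_one_le_of_convexOn_or_concaveOn hδ hconv hkpos hhalf hdouble)
    (eventually_abs_div_sub_one_le_rpow hβ hC.le hh₀.1 hscale)).congr' ?_
  filter_upwards [self_mem_nhdsWithin] with t (ht : 0 < t)
  exact (integral_sub_mul_exp_mul_rpow_div α ht (hkpos t ht).ne').symm

/-- small-time asymptotics of the forward fractional derivative
`k̃(t) = ∫_0^∞ (k(t+z) − k(t)) e^{−z} z^{−1−α} dz` of a kernel `k` that is regularly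
varying at `0` with index `ρ < 1`: the defining integral converges absolutely for every
`t > 0`, and `k̃(t)/(t^{−α} k(t)) → ∫_0^∞ ((1+u)^ρ − 1) u^{−1−α} du` as `t → 0+`. -/
theorem stmt2 (k : ℝ → ℝ) (ρ : ℝ) (ℓ : ℝ → ℝ) (β h₀ C α : ℝ)
    (hρ : ρ < 1)
    (hk_smooth : ContDiffOn ℝ 1 k (Ioi 0))
    (hloc : ∀ T : ℝ, 0 < T → IntegrableOn (fun t => (k t) ^ 2) (Ioc 0 T))
    (hℓpos : ∀ x : ℝ, 0 < x → 0 < ℓ x) (hℓsv : SlowlyVarying ℓ)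
    (hreg : ∀ t : ℝ, 0 < t → k t = t ^ ρ * ℓ (1 / t))
    (hmono : ∃ δ > 0, MonotoneOn (deriv k) (Ioc 0 δ) ∨ AntitoneOn (deriv k) (Ioc 0 δ))
    (hβ : 0 ≤ β) (hh₀ : h₀ ∈ Ioo (0 : ℝ) 1) (hC : 0 < C)
    (hscale : ∀ t ∈ Ioc (0 : ℝ) h₀, ∀ u : ℝ, 1 ≤ u → |k (t * u) / k t| ≤ C * u ^ β)
    (hα : α ∈ Ioo β 1) :
    (∀ t : ℝ, 0 < t →
      IntegrableOn (fun z => (k (t + z) - k t) * Real.exp (-z) * z ^ (-1 - α)) (Ioi 0)) ∧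
    Tendsto
      (fun t => (∫ z in Ioi (0 : ℝ), (k (t + z) - k t) * Real.exp (-z) * z ^ (-1 - α)) /
        (t ^ (-α) * k t))
      (nhdsWithin 0 (Ioi 0))
      (nhds (∫ u in Ioi (0 : ℝ), ((1 + u) ^ ρ - 1) * u ^ (-1 - α))) :=
  stmt2_general k ρ ℓ β h₀ C α hk_smooth hℓpos hℓsv hreg hmono hβ hh₀ hC hscale hα
end

section
/- Let N ≥ 1, let a_1, …, a_N ∈ ℝ be nonzero, let λ_1, …, λ_N ≥ 0 be pairwise distinct, and set f(t) = ∑_{j=1}^N a_j e^{−λ_j t} for t ≥ 0. Then for every T > 0, the set of admissible perturbations M_ad(f, T), i.e. the L²([0,T])-closure of the linear span of the translates f(· + z) for z ≥ 0, equals the N-dimensional linear subspace { ∑_{j=1}^N c_j e^{−λ_j ·} : c_1, …, c_N ∈ ℝ } of L²([0,T]). -/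
open MeasureTheory Filter Set

/-- `g` belongs to the set `M_ad(f, T)` of admissible perturbations of a scalar kernel `f`
on `[0,T]`: the closure in `L²([0,T])` of finite linear combinations `∑_j a_j f(· + z_j)`
with shifts `z_j ≥ 0`. -/
def MemAdmissiblePerturbationsScalar (f : ℝ → ℝ) (T : ℝ) (g : ℝ → ℝ) : Prop :=
  ∀ ε : ℝ, 0 < ε → ∃ (n : ℕ) (a z : Fin n → ℝ),
    (∀ j, 0 ≤ z j) ∧
    (∫⁻ t in Set.Ioc (0 : ℝ) T,
        ENNReal.ofReal (((∑ j, a j * f (t + z j)) - g t) ^ 2)) <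
      ENNReal.ofReal ε

/-! Translating an exponential sum only rescales its coefficients:
`∑ₖ aₖ e^{-λₖ (t + z)} = ∑ₖ (aₖ e^{-λₖ z}) e^{-λₖ t}`. Hence every admissible perturbation is an
`L²`-limit of elements of the span of the functions `e^{-λₖ t}`, which is finite-dimensional and
therefore closed in `L²`. Conversely, for the shifts `zⱼ = j` the coefficient map
`b ↦ (aₖ ∑ⱼ bⱼ e^{-λₖ j})ₖ` is a Vandermonde matrix in the distinct nodes `e^{-λₖ}` scaled by the
nonzero `aₖ`, hence surjective, so every element of the span is an exact combination of
translates. -/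

open scoped ENNReal

namespace MeasureTheory

variable {α 𝕜 E ι : Type*} [MeasurableSpace α] {μ : Measure α} {p : ℝ≥0∞}
  [NontriviallyNormedField 𝕜] [NormedAddCommGroup E] [NormedSpace 𝕜 E] [Fintype ι]

theorem Lp.coeFn_sum_smul_toLp {f : ι → α → E} (hf : ∀ i, MemLp (f i) p μ) (c : ι → 𝕜) :
    ⇑(∑ i, c i • (hf i).toLp (f i)) =ᵐ[μ] ∑ i, c i • f i := by
  filter_upwards [Lp.coeFn_fun_finsetSum Finset.univ fun i => c i • (hf i).toLp (f i),
    ae_all_iff.2 fun i => Lp.coeFn_smul (c i) ((hf i).toLp (f i)),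
    ae_all_iff.2 fun i => (hf i).coeFn_toLp] with x hsum hsmul htoLp
  rw [hsum, Finset.sum_apply]
  simp only [hsmul, Pi.smul_apply, htoLp]

theorem exists_ae_eq_sum_smul_of_forall_eLpNorm_sub_lt [Fact (1 ≤ p)] [CompleteSpace 𝕜]
    {f : ι → α → E} (hf : ∀ i, MemLp (f i) p μ) {g : α → E} (hg : AEStronglyMeasurable g μ)
    (h : ∀ ε : ℝ, 0 < ε → ∃ c : ι → 𝕜, eLpNorm (∑ i, c i • f i - g) p μ < ENNReal.ofReal ε) :
    ∃ c : ι → 𝕜, g =ᵐ[μ] ∑ i, c i • f i := by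
  have hsum (c : ι → 𝕜) : MemLp (∑ i, c i • f i) p μ :=
    memLp_finsetSum' _ fun i _ => (hf i).const_smul (c i)
  have hgLp : MemLp g p μ := by
    obtain ⟨c, hc⟩ := h 1 one_pos
    simpa using (hsum c).sub ⟨(hsum c).1.sub hg, hc.trans ENNReal.ofReal_lt_top⟩
  set V : Submodule 𝕜 (Lp E p μ) := Submodule.span 𝕜 (range fun i => (hf i).toLp (f i))
  have hclosure : hgLp.toLp g ∈ closure (V : Set (Lp E p μ)) := by
    refine Metric.mem_closure_iff.2 fun ε hε => ?_
    obtain ⟨c, hc⟩ := h ε hε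
    refine ⟨∑ i, c i • (hf i).toLp (f i),
      Submodule.sum_mem _ fun i _ => Submodule.smul_mem _ _ (Submodule.subset_span ⟨i, rfl⟩), ?_⟩
    rw [← edist_lt_ofReal, Lp.edist_def, eLpNorm_sub_comm]
    refine lt_of_eq_of_lt (eLpNorm_congr_ae ?_) hc
    filter_upwards [hgLp.coeFn_toLp, Lp.coeFn_sum_smul_toLp hf c] with x hgx hx
    rw [Pi.sub_apply, Pi.sub_apply, hgx, hx]
  have : FiniteDimensional 𝕜 V := FiniteDimensional.span_of_finite 𝕜 (finite_range _)
  rw [V.closed_of_finiteDimensional.closure_eq] at hclosure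
  obtain ⟨c, hc⟩ := (Submodule.mem_span_range_iff_exists_fun 𝕜).1 hclosure
  refine ⟨c, ?_⟩
  filter_upwards [hgLp.coeFn_toLp, Lp.coeFn_sum_smul_toLp hf c] with x hgx hx
  rw [← hgx, ← hx, hc]

theorem eLpNorm_two_sq_eq_lintegral {α : Type*} [MeasurableSpace α] {μ : Measure α}
    (f : α → ℝ) : eLpNorm f 2 μ ^ 2 = ∫⁻ x, ENNReal.ofReal (f x ^ 2) ∂μ := by
  have := eLpNorm_nnreal_pow_eq_lintegral (f := f) (μ := μ) (p := 2) two_ne_zero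
  simp only [NNReal.coe_ofNat, ENNReal.rpow_ofNat, ENNReal.coe_ofNat] at this
  rw [this]
  congr 1 with x
  rw [← ofReal_norm, ← ENNReal.ofReal_pow (norm_nonneg _), Real.norm_eq_abs, sq_abs]

end MeasureTheory

section ExponentialSums

variable {ι κ : Type*} [Fintype ι] [Fintype κ]

noncomputable def expSum (lam c : ι → ℝ) (t : ℝ) : ℝ :=
  ∑ k, c k * Real.exp (-lam k * t)

theorem sum_mul_expSum_add (lam a : ι → ℝ) (b z : κ → ℝ) (t : ℝ) :
    ∑ j, b j * expSum lam a (t + z j) =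
      expSum lam (fun k => a k * ∑ j, b j * Real.exp (-lam k * z j)) t := by
  simp only [expSum, Finset.mul_sum, Finset.sum_mul]
  rw [Finset.sum_comm]
  refine Finset.sum_congr rfl fun k _ => Finset.sum_congr rfl fun j _ => ?_
  rw [mul_add, Real.exp_add]
  ring

end ExponentialSums

theorem exists_sum_mul_exp_neg_mul_natCast_eq {n : ℕ} {lam : Fin n → ℝ}
    (hlam : Function.Injective lam) (d : Fin n → ℝ) :
    ∃ b : Fin n → ℝ, ∀ k, ∑ j, b j * Real.exp (-lam k * (j : ℕ)) = d k := by
  set x : Fin n → ℝ := fun k => Real.exp (-lam k)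
  have hx : Function.Injective x := fun k l h => hlam (neg_injective (Real.exp_eq_exp.1 h))
  obtain ⟨b, hb⟩ := Matrix.mulVec_surjective_iff_isUnit.2
    (Matrix.isUnit_iff_isUnit_det _ |>.2 (Matrix.det_vandermonde_ne_zero_iff.2 hx).isUnit) d
  refine ⟨b, fun k => ?_⟩
  rw [← hb]
  simp only [Matrix.mulVec, Matrix.vandermonde, dotProduct, Matrix.of_apply, x]
  refine Finset.sum_congr rfl fun j _ => ?_
  rw [mul_comm (-lam k), Real.exp_nat_mul, mul_comm]

theorem MemAdmissiblePerturbationsScalar.exists_ae_eq_expSum {ι : Type*} [Fintype ι]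
    {lam a : ι → ℝ} {T : ℝ} {g : ℝ → ℝ} (hg : Measurable g)
    (H : MemAdmissiblePerturbationsScalar (expSum lam a) T g) :
    ∃ c, ∀ᵐ t ∂(volume.restrict (Ioc (0 : ℝ) T)), g t = expSum lam c t := by
  have he (k : ι) :
      MemLp (fun t => Real.exp (-lam k * t)) 2 (volume.restrict (Ioc (0 : ℝ) T)) :=
    (memLp_two_iff_integrable_sq (by fun_prop)).2 (Continuous.integrableOn_Ioc (by fun_prop))
  refine (exists_ae_eq_sum_smul_of_forall_eLpNorm_sub_lt (𝕜 := ℝ) he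
    hg.aestronglyMeasurable fun ε hε => ?_).imp fun c hc => ?_
  · obtain ⟨n, b, z, -, hlt⟩ := H (ε ^ 2) (by positivity)
    refine ⟨fun k => a k * ∑ j, b j * Real.exp (-lam k * z j), ?_⟩
    rw [← ENNReal.pow_lt_pow_left_iff two_ne_zero, eLpNorm_two_sq_eq_lintegral,
      ← ENNReal.ofReal_pow hε.le]
    refine lt_of_eq_of_lt (lintegral_congr fun t => ?_) hlt
    rw [sum_mul_expSum_add]
    simp [Finset.sum_apply, expSum]
  · filter_upwards [hc] with t ht
    simpa [Finset.sum_apply, expSum] using ht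

theorem memAdmissiblePerturbationsScalar_expSum {n : ℕ} {lam a c : Fin n → ℝ}
    (ha : ∀ k, a k ≠ 0) (hlam : Function.Injective lam) {T : ℝ} {g : ℝ → ℝ}
    (hc : ∀ᵐ t ∂(volume.restrict (Ioc (0 : ℝ) T)), g t = expSum lam c t) :
    MemAdmissiblePerturbationsScalar (expSum lam a) T g := by
  intro ε hε
  obtain ⟨b, hb⟩ := exists_sum_mul_exp_neg_mul_natCast_eq hlam fun k => c k / a k
  refine ⟨n, b, fun j => (j : ℕ), fun j => Nat.cast_nonneg _, ?_⟩
  have hcoeff : (fun k => a k * ∑ j, b j * Real.exp (-lam k * (j : ℕ))) = c := by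
    ext k
    rw [hb, mul_div_cancel₀ _ (ha k)]
  calc _ = ∫⁻ _ in Ioc 0 T, 0 := lintegral_congr_ae <| by
        filter_upwards [hc] with t ht
        rw [sum_mul_expSum_add, hcoeff, ← ht, sub_self, zero_pow two_ne_zero,
          ENNReal.ofReal_zero]
    _ < ENNReal.ofReal ε := by simpa using hε

theorem stmt6_general (N : ℕ) (a lam : Fin (N + 1) → ℝ)
    (ha : ∀ j, a j ≠ 0) (hdist : Function.Injective lam)
    (T : ℝ) (g : ℝ → ℝ) (hg : Measurable g) :
    MemAdmissiblePerturbationsScalar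
        (fun t => ∑ j, a j * Real.exp (-(lam j) * t)) T g ↔
      ∃ c : Fin (N + 1) → ℝ, ∀ᵐ t ∂(volume.restrict (Ioc (0 : ℝ) T)),
        g t = ∑ j, c j * Real.exp (-(lam j) * t) :=
  ⟨fun H => H.exists_ae_eq_expSum hg,
    fun ⟨_, hc⟩ => memAdmissiblePerturbationsScalar_expSum ha hdist hc⟩

/-- for `f(t) = ∑_{j=1}^N a_j e^{−λ_j t}` with nonzero coefficients and
pairwise distinct `λ_j ≥ 0`, the set of admissible perturbations `M_ad(f, T)` is exactly
the `N`-dimensional subspace `{ ∑ c_j e^{−λ_j ·} }` of `L²([0,T])`. -/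
theorem stmt6 (N : ℕ) (a lam : Fin (N + 1) → ℝ)
    (ha : ∀ j, a j ≠ 0) (hlam : ∀ j, 0 ≤ lam j) (hdist : Function.Injective lam)
    (T : ℝ) (hT : 0 < T) (g : ℝ → ℝ) (hg : Measurable g)
    (hgL2 : IntegrableOn (fun t => (g t) ^ 2) (Ioc 0 T)) :
    MemAdmissiblePerturbationsScalar
        (fun t => ∑ j, a j * Real.exp (-(lam j) * t)) T g ↔
      ∃ c : Fin (N + 1) → ℝ, ∀ᵐ t ∂(volume.restrict (Ioc (0 : ℝ) T)),
        g t = ∑ j, c j * Real.exp (-(lam j) * t) :=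
  stmt6_general N a lam ha hdist T g hg
end

section
/- Let d ≥ 1, and for each j ∈ {1,…,d} let k_j : (0,∞) → ℝ be continuously differentiable with k_j' monotone on some right-neighborhood of 0, such that lim_{t→0+} k_j(t)/(t^{H_j − 1/2} ℓ_j(1/t)) = 1 for some H_j ∈ (0,1) and some slowly varying function ℓ_j : (0,∞) → (0,∞), and such that ∫_1^∞ |k_j'(t)|² dt < ∞. Set K(t) = diag(k_1(t), …, k_d(t)) and H_min = min_j H_j. Then for every T > 0 and every sufficiently small ε > 0 there exists C_{T,ε} > 0 such that for all h ∈ (0, T]: ∫_0^h ‖K(t)‖² dt + ∫_0^T ‖K(t+h) − K(t)‖² dt ≤ C_{T,ε} h^{2 H_min − 2ε}, where ‖·‖ denotes the matrix operator norm. -/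
/-!
Since `‖diag v‖² ≤ ∑ⱼ vⱼ²`, it suffices to treat each entry `k = kⱼ` separately, with
`β = H - 1/2 - ε ∈ (-1/2, 1/2)`. By the uniform convergence theorem, a slowly varying `ℓ` grows
slower than any power (Potter's bound), so `|k t| ≤ C t^β` near `0`. Squeezing `k' t` between the
slopes of `k` over `[t/2, t]` and `[t, 2t]` (monotonicity of `k'`) gives `|k' t| ≤ 8 C t^(β-1)`,
and by continuity both bounds hold on all of `(0, 3T]`. Then `∫₀ʰ k² = O(h^(2β+1))`; the increment
integral over `(0, 2h]` is bounded by `4 ∫₀^{3h} k²`, and over `(2h, T]` the mean value theorem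
gives `|k (t+h) - k t| ≤ A h t^(β-1)`, whose square integrates to `O(h^(2β+1))` as well.
-/

open MeasureTheory Filter Set Matrix

/-- The operator (spectral) norm `‖A‖ = sup_{|x| = 1} |A x|` of a real matrix, with
respect to the Euclidean norms. -/
noncomputable def opNorm {n m : ℕ} (A : Matrix (Fin n) (Fin m) ℝ) : ℝ :=
  sSup {r : ℝ | ∃ x : Fin m → ℝ, (∑ i, x i ^ 2) = 1 ∧
    r = Real.sqrt (∑ i, (A.mulVec x i) ^ 2)}

open Topology

section UniformConvergence

variable {f : ℝ → ℝ}

lemma tendsto_volume_setOf_forall_abs_add_sub_le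
    (hlim : ∀ v, Tendsto (fun x => f (x + v) - f x) atTop (𝓝 0))
    {c : ℕ → ℝ} (hc : Tendsto c atTop atTop) {η : ℝ} (hη : 0 < η) :
    Tendsto (fun N => volume {v ∈ Icc (0 : ℝ) 2 | ∀ m ≥ N, |f (c m + v) - f (c m)| ≤ η})
      atTop (𝓝 (volume (Icc (0 : ℝ) 2))) := by
  have hmono : Monotone fun N => {v ∈ Icc (0 : ℝ) 2 | ∀ m ≥ N, |f (c m + v) - f (c m)| ≤ η} :=
    fun N N' hNN' v hv => ⟨hv.1, fun m hm => hv.2 m (hNN'.trans hm)⟩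
  have hU : ⋃ N, {v ∈ Icc (0 : ℝ) 2 | ∀ m ≥ N, |f (c m + v) - f (c m)| ≤ η} = Icc 0 2 := by
    refine Subset.antisymm (iUnion_subset fun N v hv => hv.1) fun v hv => ?_
    have hsmall : ∀ᶠ m in atTop, |f (c m + v) - f (c m)| ≤ η := by
      simpa using ((hlim v).comp hc).abs.eventually (ge_mem_nhds (by simpa using hη))
    obtain ⟨N, hN⟩ := eventually_atTop.mp hsmall
    exact mem_iUnion.mpr ⟨N, hv, hN⟩
  have := tendsto_measure_iUnion_atTop (μ := volume) hmono
  rwa [hU] at this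

lemma measurableSet_setOf_forall_abs_add_sub_le (hf : Measurable f) (c : ℕ → ℝ) (η : ℝ)
    (N : ℕ) : MeasurableSet {v ∈ Icc (0 : ℝ) 2 | ∀ m ≥ N, |f (c m + v) - f (c m)| ≤ η} := by
  refine measurableSet_Icc.inter (measurableSet_setOfPred.2 ?_)
  exact Measurable.forall fun m => Measurable.forall fun _ =>
    measurableSet_setOfPred.1 (measurableSet_le
      (((hf.comp (measurable_const_add _)).sub_const _).abs) measurable_const)

theorem Measurable.eventually_forall_abs_add_sub_le (hf : Measurable f)
    (hlim : ∀ v, Tendsto (fun x => f (x + v) - f x) atTop (𝓝 0)) {ε : ℝ} (hε : 0 < ε) :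
    ∀ᶠ x in atTop, ∀ u ∈ Icc (0 : ℝ) 1, |f (x + u) - f x| ≤ ε := by
  by_contra hcon
  simp only [not_eventually, not_forall, not_le, frequently_atTop, exists_prop] at hcon
  choose x hx u hu hbig using fun n : ℕ => hcon n
  have hxtop : Tendsto x atTop atTop := tendsto_atTop_mono hx tendsto_natCast_atTop_atTop
  have hytop : Tendsto (fun m => x m + u m) atTop atTop :=
    tendsto_atTop_mono (fun m => le_add_of_nonneg_right (hu m).1) hxtop
  set E := fun (c : ℕ → ℝ) N =>
    {v ∈ Icc (0 : ℝ) 2 | ∀ m ≥ N, |f (c m + v) - f (c m)| ≤ ε / 3}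
  -- The shifts in `[0, 2]` that are good for `x` and those good for `x + u` both have measure
  -- close to `2`, so inside `[0, 3]` the first set meets the second translated by `u N`; a common
  -- point `w` then forces `|f (x N + u N) - f (x N)| ≤ 2ε/3`.
  have hvol : ∀ᶠ N in atTop, volume (Icc (0 : ℝ) 3) <
      volume (E x N) + volume (E (fun m => x m + u m) N) := by
    refine ((tendsto_volume_setOf_forall_abs_add_sub_le hlim hxtop (by positivity)).add
      (tendsto_volume_setOf_forall_abs_add_sub_le hlim hytop (by positivity))).eventually_const_lt
      ?_
    rw [Real.volume_Icc, Real.volume_Icc, ← ENNReal.ofReal_add (by norm_num) (by norm_num)]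
    exact (ENNReal.ofReal_lt_ofReal_iff (by norm_num)).2 (by norm_num)
  obtain ⟨N, hN⟩ := hvol.exists
  obtain ⟨w, hwx, hwy⟩ :
      (E x N ∩ (fun w => w + -u N) ⁻¹' E (fun m => x m + u m) N).Nonempty := by
    refine nonempty_inter_of_measure_lt_add volume
      ((measurableSet_setOf_forall_abs_add_sub_le hf _ _ N).preimage (measurable_add_const _))
      (u := Icc 0 3) ?_ ?_ (by rwa [measure_preimage_add_right])
    · exact fun w hw => ⟨hw.1.1, by linarith [hw.1.2]⟩
    · rintro w ⟨⟨hw0, hw2⟩, -⟩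
      dsimp only at hw0 hw2
      exact ⟨by linarith [(hu N).1], by linarith [(hu N).2]⟩
  have h1 := hwx.2 N le_rfl
  have h2 := hwy.2 N le_rfl
  rw [show x N + u N + (w + -u N) = x N + w by ring, abs_sub_comm] at h2
  linarith [hbig N, abs_sub_le (f (x N + u N)) (f (x N + w)) (f (x N))]

end UniformConvergence

lemma le_add_mul_of_forall_add_le {g : ℝ → ℝ} {X ε : ℝ}
    (hg : ∀ x ≥ X, ∀ u ∈ Icc (0 : ℝ) 1, g (x + u) ≤ g x + ε) :
    ∀ y ≥ X, g y ≤ g X + (y - X + 2) * ε := by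
  have hε : 0 ≤ ε := by simpa using hg X le_rfl 0 (by simp)
  have hstep : ∀ n : ℕ, ∀ y ∈ Icc X (X + n), g y ≤ g X + (n + 1) * ε := by
    intro n
    induction n with
    | zero =>
      rintro y ⟨hXy, hyX⟩
      obtain rfl : y = X := le_antisymm (by simpa using hyX) hXy
      simpa using hε
    | succ n ih =>
      rintro y ⟨hXy, hyX⟩
      have hx : max X (y - 1) ∈ Icc X (X + n) :=
        ⟨le_max_left _ _, max_le (by simp) (by push_cast at hyX; linarith)⟩
      have := hg _ hx.1 (y - max X (y - 1))
        ⟨sub_nonneg.2 (max_le hXy (by linarith)), by linarith [le_max_right X (y - 1)]⟩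
      rw [add_sub_cancel] at this
      push_cast
      linarith [ih _ hx]
  intro y hy
  obtain ⟨n, hn, hn'⟩ : ∃ n : ℕ, y - X ≤ n ∧ (n : ℝ) < y - X + 1 :=
    ⟨⌈y - X⌉₊, Nat.le_ceil _, Nat.ceil_lt_add_one (by linarith)⟩
  linarith [hstep n y ⟨hy, by linarith⟩, mul_le_mul_of_nonneg_right hn'.le hε]

theorem SlowlyVarying.exists_eventually_le_mul_rpow {ℓ : ℝ → ℝ} (hℓ : SlowlyVarying ℓ)
    (hpos : ∀ x, 0 < x → 0 < ℓ x) {ε : ℝ} (hε : 0 < ε) : ∃ C, ∀ᶠ x in atTop, ℓ x ≤ C * x ^ ε := by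
  set g : ℝ → ℝ := fun x => Real.log (ℓ (Real.exp x))
  have hlim : ∀ v, Tendsto (fun x => g (x + v) - g x) atTop (𝓝 0) := by
    intro v
    have := ((Real.continuousAt_log one_ne_zero).tendsto.comp
      ((hℓ.2 _ (Real.exp_pos v)).comp Real.tendsto_exp_atTop))
    rw [Real.log_one] at this
    refine this.congr fun x => ?_
    simp only [Function.comp_apply, g, Real.exp_add, mul_comm (Real.exp x)]
    exact Real.log_div (hpos _ (by positivity)).ne' (hpos _ (Real.exp_pos x)).ne'
  obtain ⟨X, hX⟩ := eventually_atTop.1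
    ((Real.measurable_log.comp (hℓ.1.comp Real.measurable_exp)).eventually_forall_abs_add_sub_le
      hlim hε)
  have hgrowth := le_add_mul_of_forall_add_le (g := g) fun x hx u hu =>
    sub_le_iff_le_add'.1 (abs_le.1 (hX x hx u hu)).2
  refine ⟨Real.exp (g X + (2 - X) * ε), ?_⟩
  filter_upwards [eventually_ge_atTop (Real.exp X)] with x hx
  have hx0 : 0 < x := (Real.exp_pos X).trans_le hx
  have hlog : g (Real.log x) = Real.log (ℓ x) := by simp only [g, Real.exp_log hx0]
  calc ℓ x = Real.exp (g (Real.log x)) := by rw [hlog, Real.exp_log (hpos x hx0)]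
    _ ≤ Real.exp (g X + (Real.log x - X + 2) * ε) :=
      Real.exp_le_exp.2 (hgrowth _ ((Real.le_log_iff_exp_le hx0).2 hx))
    _ = Real.exp (g X + (2 - X) * ε) * x ^ ε := by
      rw [Real.rpow_def_of_pos hx0, ← Real.exp_add]; ring_nf

lemma eventually_abs_le_mul_rpow_of_tendsto_div {k ℓ : ℝ → ℝ} {p ε C : ℝ}
    (hℓ : ∀ᶠ x in atTop, ℓ x ≤ C * x ^ ε) (hpos : ∀ x, 0 < x → 0 < ℓ x)
    (hreg : Tendsto (fun t => k t / (t ^ p * ℓ (1 / t))) (𝓝[>] 0) (𝓝 1)) :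
    ∀ᶠ t in 𝓝[>] 0, |k t| ≤ 2 * C * t ^ (p - ε) := by
  have hinv : Tendsto (fun t : ℝ => 1 / t) (𝓝[>] 0) atTop := by
    simpa only [one_div] using tendsto_inv_nhdsGT_zero
  filter_upwards [self_mem_nhdsWithin, hinv.eventually hℓ,
    hreg.eventually (Ioo_mem_nhds one_pos one_lt_two)] with t (ht : 0 < t) hℓt ⟨hq0, hq2⟩
  have hden : 0 < t ^ p * ℓ (1 / t) :=
    mul_pos (Real.rpow_pos_of_pos ht p) (hpos _ (one_div_pos.2 ht))
  have hk : 0 < k t := by simpa only [div_mul_cancel₀ _ hden.ne'] using mul_pos hq0 hden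
  calc |k t| = k t / (t ^ p * ℓ (1 / t)) * (t ^ p * ℓ (1 / t)) := by
        rw [abs_of_pos hk, div_mul_cancel₀ _ hden.ne']
    _ ≤ 2 * (t ^ p * (C * (1 / t) ^ ε)) := by gcongr
    _ = 2 * C * t ^ (p - ε) := by
        rw [Real.rpow_sub ht, Real.div_rpow zero_le_one ht.le, Real.one_rpow]; ring

lemma exists_forall_Ioc_abs_le_mul_rpow {f : ℝ → ℝ} {γ C : ℝ} (hf : ContinuousOn f (Ioi 0))
    (hev : ∀ᶠ t in 𝓝[>] 0, |f t| ≤ C * t ^ γ) (R : ℝ) :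
    ∃ C', ∀ t ∈ Ioc 0 R, |f t| ≤ C' * t ^ γ := by
  obtain ⟨δ, hδ, hδsub⟩ := mem_nhdsGT_iff_exists_Ioo_subset.1 hev
  have hpos : ∀ t ∈ Icc δ R, 0 < t := fun t ht => hδ.trans_le ht.1
  obtain ⟨M, hM⟩ : ∃ M, ∀ t ∈ Icc δ R, ‖f t / t ^ γ‖ ≤ M :=
    isCompact_Icc.exists_bound_of_continuousOn ((hf.mono hpos).div
      (continuousOn_id.rpow_const fun t ht => Or.inl (hpos t ht).ne')
      fun t ht => (Real.rpow_pos_of_pos (hpos t ht) γ).ne')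
  refine ⟨max C M, fun t ⟨ht0, htR⟩ => ?_⟩
  have htγ := Real.rpow_pos_of_pos ht0 γ
  rcases lt_or_ge t δ with htδ | htδ
  · exact (hδsub ⟨ht0, htδ⟩).trans (mul_le_mul_of_nonneg_right (le_max_left _ _) htγ.le)
  · have := hM t ⟨htδ, htR⟩
    rw [Real.norm_eq_abs, abs_div, abs_of_pos htγ, div_le_iff₀ htγ] at this
    exact this.trans (mul_le_mul_of_nonneg_right (le_max_right _ _) htγ.le)

lemma abs_deriv_le_max_abs_slope {k : ℝ → ℝ} {a b c : ℝ} (hab : a < b) (hbc : b < c)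
    (hk : ∀ x ∈ Icc a c, HasDerivAt k (deriv k x) x)
    (hmono : MonotoneOn (deriv k) (Icc a c) ∨ AntitoneOn (deriv k) (Icc a c)) :
    |deriv k b| ≤ max |(k b - k a) / (b - a)| |(k c - k b) / (c - b)| := by
  have hcont : ∀ x y, a ≤ x → y ≤ c → ContinuousOn k (Icc x y) := fun x y hx hy z hz =>
    (hk z ⟨hx.trans hz.1, hz.2.trans hy⟩).continuousAt.continuousWithinAt
  obtain ⟨c₁, hc₁, hs₁⟩ := exists_hasDerivAt_eq_slope k (deriv k) hab (hcont a b le_rfl hbc.le)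
    fun x hx => hk x ⟨hx.1.le, hx.2.le.trans hbc.le⟩
  obtain ⟨c₂, hc₂, hs₂⟩ := exists_hasDerivAt_eq_slope k (deriv k) hbc (hcont b c hab.le le_rfl)
    fun x hx => hk x ⟨hab.le.trans hx.1.le, hx.2.le⟩
  have hm₁ : c₁ ∈ Icc a c := ⟨hc₁.1.le, hc₁.2.le.trans hbc.le⟩
  have hm₂ : c₂ ∈ Icc a c := ⟨hab.le.trans hc₂.1.le, hc₂.2.le⟩
  have hb : b ∈ Icc a c := ⟨hab.le, hbc.le⟩
  rw [← hs₁, ← hs₂]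
  rcases hmono with hmono | hanti
  · exact abs_le_max_abs_abs (hmono hm₁ hb hc₁.2.le) (hmono hb hm₂ hc₂.1.le)
  · rw [max_comm]
    exact abs_le_max_abs_abs (hanti hb hm₂ hc₂.1.le) (hanti hm₁ hb hc₁.2.le)

lemma nonneg_of_abs_le_mul_rpow {x y C γ : ℝ} (hx : 0 < x) (h : |y| ≤ C * x ^ γ) : 0 ≤ C :=
  nonneg_of_mul_nonneg_left ((abs_nonneg y).trans h) (Real.rpow_pos_of_pos hx γ)

lemma rpow_le_two_mul_rpow {s t β : ℝ} (ht : 0 < t) (hs : s ∈ Icc (t / 2) (2 * t))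
    (hβ : |β| ≤ 1) : s ^ β ≤ 2 * t ^ β := by
  have hst : s / t ∈ Icc (1 / 2 : ℝ) 2 := by
    constructor <;> [rw [le_div_iff₀ ht]; rw [div_le_iff₀ ht]] <;> linarith [hs.1, hs.2]
  have hratio : (s / t) ^ β ≤ 2 := by
    rcases le_total 0 β with hβ0 | hβ0
    · calc (s / t) ^ β ≤ 2 ^ β := Real.rpow_le_rpow (by linarith [hst.1]) hst.2 hβ0
        _ ≤ 2 ^ (1 : ℝ) := Real.rpow_le_rpow_of_exponent_le one_le_two (le_of_abs_le hβ)
        _ = 2 := Real.rpow_one 2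
    · calc (s / t) ^ β ≤ (1 / 2) ^ β := Real.rpow_le_rpow_of_nonpos (by norm_num) hst.1 hβ0
        _ = 2 ^ (-β) := by rw [one_div, Real.inv_rpow zero_le_two, Real.rpow_neg zero_le_two]
        _ ≤ 2 ^ (1 : ℝ) := Real.rpow_le_rpow_of_exponent_le one_le_two ((neg_le_abs β).trans hβ)
        _ = 2 := Real.rpow_one 2
  calc s ^ β = (s / t) ^ β * t ^ β := by
        rw [Real.div_rpow (by linarith [hs.1]) ht.le, div_mul_cancel₀ _ (by positivity)]
    _ ≤ 2 * t ^ β := mul_le_mul_of_nonneg_right hratio (by positivity)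

lemma abs_sub_div_le {x y M d : ℝ} (hx : |x| ≤ M) (hy : |y| ≤ M) (hd : 0 < d) :
    |(x - y) / d| ≤ 2 * M / d := by
  rw [abs_div, abs_of_pos hd]
  exact div_le_div_of_nonneg_right ((abs_sub x y).trans (by linarith)) hd.le

lemma eventually_abs_deriv_le_mul_rpow {k : ℝ → ℝ} {β C R : ℝ}
    (hk : DifferentiableOn ℝ k (Ioi 0))
    (hmono : ∃ δ > 0, MonotoneOn (deriv k) (Ioc 0 δ) ∨ AntitoneOn (deriv k) (Ioc 0 δ))
    (hR : 0 < R) (hkb : ∀ t ∈ Ioc 0 R, |k t| ≤ C * t ^ β) (hβ : |β| ≤ 1) :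
    ∀ᶠ t in 𝓝[>] 0, |deriv k t| ≤ 8 * C * t ^ (β - 1) := by
  obtain ⟨δ, hδ, hmono⟩ := hmono
  have hC : 0 ≤ C := nonneg_of_abs_le_mul_rpow hR (hkb R ⟨hR, le_rfl⟩)
  filter_upwards [Ioo_mem_nhdsGT (show (0 : ℝ) < min δ R / 2 by positivity)] with t ⟨ht0, ht⟩
  have h2t : 2 * t ≤ min δ R := by linarith
  have hsub : Icc (t / 2) (2 * t) ⊆ Ioc 0 δ := fun x hx =>
    ⟨by linarith [hx.1], hx.2.trans (h2t.trans (min_le_left _ _))⟩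
  have hslope := abs_deriv_le_max_abs_slope (k := k) (half_lt_self ht0) (by linarith)
    (fun x hx => (hk.differentiableAt (Ioi_mem_nhds (by linarith [hx.1]))).hasDerivAt)
    (hmono.imp (·.mono hsub) (·.mono hsub))
  have hkt : ∀ s ∈ Icc (t / 2) (2 * t), |k s| ≤ 2 * C * t ^ β := fun s hs =>
    (hkb s ⟨by linarith [hs.1], hs.2.trans (h2t.trans (min_le_right _ _))⟩).trans
      ((mul_le_mul_of_nonneg_left (rpow_le_two_mul_rpow ht0 hs hβ) hC).trans_eq (by ring))
  have hmid : t ∈ Icc (t / 2) (2 * t) := ⟨by linarith, by linarith⟩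
  have hpow : 8 * C * t ^ (β - 1) = 2 * (2 * C * t ^ β) / (t - t / 2) := by
    rw [Real.rpow_sub_one ht0.ne']; field_simp; ring
  refine hslope.trans (max_le ?_ ?_) <;> rw [hpow]
  · exact abs_sub_div_le (hkt t hmid) (hkt _ ⟨le_rfl, by linarith⟩) (by linarith)
  · refine (abs_sub_div_le (hkt _ ⟨by linarith, le_rfl⟩) (hkt t hmid) (by linarith)).trans ?_
    exact div_le_div_of_nonneg_left (by positivity) (by linarith) (by linarith)

lemma rpow_le_rpow_sub_mul_rpow {h T α γ : ℝ} (hh : 0 < h) (hhT : h ≤ T) (hαγ : α ≤ γ) :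
    h ^ γ ≤ T ^ (γ - α) * h ^ α :=
  calc h ^ γ = h ^ (γ - α) * h ^ α := by rw [← Real.rpow_add hh, sub_add_cancel]
    _ ≤ T ^ (γ - α) * h ^ α := mul_le_mul_of_nonneg_right
        (Real.rpow_le_rpow hh.le hhT (sub_nonneg.2 hαγ)) (Real.rpow_nonneg hh.le _)

section Increments

variable {k : ℝ → ℝ} {β C A R : ℝ}

lemma sq_le_mul_rpow_of_abs_le (hkb : ∀ t ∈ Ioc 0 R, |k t| ≤ C * t ^ β) :
    ∀ t ∈ Ioc 0 R, k t ^ 2 ≤ C ^ 2 * t ^ (2 * β) := fun t ht => by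
  rw [mul_comm 2 β, Real.rpow_mul ht.1.le, Real.rpow_two, ← mul_pow, ← sq_abs]
  exact pow_le_pow_left₀ (abs_nonneg _) (hkb t ht) 2

lemma integrableOn_sq_of_abs_le_mul_rpow (hk : ContinuousOn k (Ioi 0))
    (hkb : ∀ t ∈ Ioc 0 R, |k t| ≤ C * t ^ β) (hβ : -1 / 2 < β) {b : ℝ} (hb : b ≤ R) :
    IntegrableOn (fun t => k t ^ 2) (Ioc 0 b) := by
  refine Integrable.mono' (((intervalIntegral.intervalIntegrable_rpow' (a := 0) (b := b)
    (r := 2 * β) (by linarith)).1).const_mul (C ^ 2))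
    ((hk.mono fun t ht => ht.1).pow 2 |>.aestronglyMeasurable measurableSet_Ioc) ?_
  refine (ae_restrict_iff' measurableSet_Ioc).2 (ae_of_all _ fun t ht => ?_)
  rw [Real.norm_eq_abs, abs_of_nonneg (sq_nonneg _)]
  exact sq_le_mul_rpow_of_abs_le hkb t ⟨ht.1, ht.2.trans hb⟩

lemma setIntegral_sq_le_of_abs_le_mul_rpow (hkb : ∀ t ∈ Ioc 0 R, |k t| ≤ C * t ^ β)
    (hβ : -1 / 2 < β) {b : ℝ} (hb0 : 0 ≤ b) (hb : b ≤ R) :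
    ∫ t in Ioc 0 b, k t ^ 2 ≤ C ^ 2 / (2 * β + 1) * b ^ (2 * β + 1) := by
  calc ∫ t in Ioc 0 b, k t ^ 2 ≤ ∫ t in Ioc 0 b, C ^ 2 * t ^ (2 * β) := by
        refine integral_mono_of_nonneg (ae_of_all _ fun t => sq_nonneg _)
          (((intervalIntegral.intervalIntegrable_rpow' (a := 0) (b := b)
            (r := 2 * β) (by linarith)).1).const_mul (C ^ 2)) ?_
        exact (ae_restrict_iff' measurableSet_Ioc).2 (ae_of_all _ fun t ht =>
          sq_le_mul_rpow_of_abs_le hkb t ⟨ht.1, ht.2.trans hb⟩)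
    _ = C ^ 2 / (2 * β + 1) * b ^ (2 * β + 1) := by
        rw [integral_const_mul, ← intervalIntegral.integral_of_le hb0,
          integral_rpow (Or.inl (by linarith)), Real.zero_rpow (by linarith)]
        ring

lemma setIntegral_Ioc_comp_add_right (f : ℝ → ℝ) {b h : ℝ} (hb : 0 ≤ b) :
    ∫ t in Ioc 0 b, f (t + h) = ∫ t in Ioc h (b + h), f t := by
  rw [← intervalIntegral.integral_of_le hb, ← intervalIntegral.integral_of_le (by linarith),
    intervalIntegral.integral_comp_add_right, zero_add]

lemma integrableOn_sq_comp_add_right (hk : ContinuousOn k (Ioi 0)) {b h : ℝ} (hh : 0 < h) :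
    IntegrableOn (fun t => k (t + h) ^ 2) (Ioc 0 b) :=
  ((hk.comp (continuous_add_const h).continuousOn fun t ht => by
    simp only [mem_Ioi]; linarith [ht.1]).pow 2).integrableOn_Icc.mono_set Ioc_subset_Icc_self

lemma integrableOn_two_mul_sq_add_sq (hk : ContinuousOn k (Ioi 0))
    (hkb : ∀ t ∈ Ioc 0 R, |k t| ≤ C * t ^ β) (hβ : -1 / 2 < β) {b h : ℝ} (hh : 0 < h)
    (hbR : b + h ≤ R) :
    IntegrableOn (fun t => 2 * (k (t + h) ^ 2 + k t ^ 2)) (Ioc 0 b) :=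
  ((integrableOn_sq_comp_add_right hk hh).add
    (integrableOn_sq_of_abs_le_mul_rpow hk hkb hβ (by linarith))).const_mul 2

lemma sub_sq_le (x y : ℝ) : (x - y) ^ 2 ≤ 2 * (x ^ 2 + y ^ 2) := by
  simpa [sub_eq_add_neg] using add_sq_le (a := x) (b := -y)

lemma integrableOn_sq_sub_of_abs_le_mul_rpow (hk : ContinuousOn k (Ioi 0))
    (hkb : ∀ t ∈ Ioc 0 R, |k t| ≤ C * t ^ β) (hβ : -1 / 2 < β) {b h : ℝ} (hh : 0 < h)
    (hbR : b + h ≤ R) :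
    IntegrableOn (fun t => (k (t + h) - k t) ^ 2) (Ioc 0 b) := by
  refine Integrable.mono' (integrableOn_two_mul_sq_add_sq hk hkb hβ hh hbR)
    (((hk.comp (continuous_add_const h).continuousOn fun t ht => ?_).sub
      (hk.mono fun t ht => ht.1)).pow 2 |>.aestronglyMeasurable measurableSet_Ioc)
    (ae_of_all _ fun t => ?_)
  · simp only [mem_Ioi]; linarith [ht.1]
  · rw [Real.norm_eq_abs, abs_of_nonneg (sq_nonneg _)]
    exact sub_sq_le _ _

lemma setIntegral_sq_sub_le_of_abs_le_mul_rpow (hk : ContinuousOn k (Ioi 0))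
    (hkb : ∀ t ∈ Ioc 0 R, |k t| ≤ C * t ^ β) (hβ : -1 / 2 < β) {b h : ℝ} (hb : 0 ≤ b)
    (hh : 0 < h) (hbR : b + h ≤ R) :
    ∫ t in Ioc 0 b, (k (t + h) - k t) ^ 2 ≤ 4 * (C ^ 2 / (2 * β + 1) * (b + h) ^ (2 * β + 1)) := by
  have hint := integrableOn_sq_of_abs_le_mul_rpow hk hkb hβ hbR
  have hsub : ∀ {s : Set ℝ}, s ⊆ Ioc 0 (b + h) →
      ∫ t in s, k t ^ 2 ≤ ∫ t in Ioc 0 (b + h), k t ^ 2 :=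
    fun hs => setIntegral_mono_set hint (ae_of_all _ fun t => sq_nonneg _) hs.eventuallyLE
  calc ∫ t in Ioc 0 b, (k (t + h) - k t) ^ 2
      ≤ ∫ t in Ioc 0 b, 2 * (k (t + h) ^ 2 + k t ^ 2) :=
        integral_mono_of_nonneg (ae_of_all _ fun t => sq_nonneg _)
          (integrableOn_two_mul_sq_add_sq hk hkb hβ hh hbR)
          (ae_of_all _ fun t => sub_sq_le _ _)
    _ = 2 * (∫ t in Ioc h (b + h), k t ^ 2) + 2 * ∫ t in Ioc 0 b, k t ^ 2 := by
        rw [integral_const_mul, integral_add (integrableOn_sq_comp_add_right hk hh)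
          (integrableOn_sq_of_abs_le_mul_rpow hk hkb hβ (by linarith)),
          setIntegral_Ioc_comp_add_right (fun t => k t ^ 2) hb, mul_add]
    _ ≤ 2 * (∫ t in Ioc 0 (b + h), k t ^ 2) + 2 * ∫ t in Ioc 0 (b + h), k t ^ 2 := by
        have h₁ := hsub (Ioc_subset_Ioc_left hh.le)
        have h₂ := hsub (Ioc_subset_Ioc_right (le_add_of_nonneg_right hh.le))
        linarith
    _ ≤ 4 * (C ^ 2 / (2 * β + 1) * (b + h) ^ (2 * β + 1)) := by
        linarith [setIntegral_sq_le_of_abs_le_mul_rpow hkb hβ (b := b + h) (by linarith) hbR]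

lemma abs_sub_le_mul_rpow_of_abs_deriv_le (hk : DifferentiableOn ℝ k (Ioi 0))
    (hdb : ∀ t ∈ Ioc 0 R, |deriv k t| ≤ A * t ^ (β - 1)) (hβ : β ≤ 1) {t h : ℝ} (ht : 0 < t)
    (hh : 0 ≤ h) (hR : t + h ≤ R) :
    |k (t + h) - k t| ≤ A * t ^ (β - 1) * h := by
  have hA : 0 ≤ A :=
    nonneg_of_abs_le_mul_rpow (ht.trans_le (by linarith)) (hdb R ⟨by linarith, le_rfl⟩)
  simpa using norm_image_sub_le_of_norm_deriv_le_segment' (f := k) (C := A * t ^ (β - 1))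
    (fun x hx =>
      (hk.differentiableAt (Ioi_mem_nhds (ht.trans_le hx.1))).hasDerivAt.hasDerivWithinAt)
    (fun x hx => (hdb x ⟨ht.trans_le hx.1, hx.2.le.trans hR⟩).trans
      (mul_le_mul_of_nonneg_left (Real.rpow_le_rpow_of_nonpos ht hx.1 (by linarith)) hA))
    (t + h) ⟨le_add_of_nonneg_right hh, le_rfl⟩

lemma setIntegral_sq_sub_le_of_abs_deriv_le (hk : DifferentiableOn ℝ k (Ioi 0))
    (hdb : ∀ t ∈ Ioc 0 R, |deriv k t| ≤ A * t ^ (β - 1)) (hβ : β < 1 / 2) {a b h : ℝ}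
    (ha : 0 < a) (hh : 0 ≤ h) (hbR : b + h ≤ R) :
    ∫ t in Ioc a b, (k (t + h) - k t) ^ 2 ≤ A ^ 2 * h ^ 2 * (a ^ (2 * β - 1) / (1 - 2 * β)) := by
  have hp : 2 * β - 2 < -1 := by linarith
  have hint : IntegrableOn (fun t => A ^ 2 * h ^ 2 * t ^ (2 * β - 2)) (Ioi a) :=
    (integrableOn_Ioi_rpow_of_lt hp ha).const_mul _
  calc ∫ t in Ioc a b, (k (t + h) - k t) ^ 2
      ≤ ∫ t in Ioc a b, A ^ 2 * h ^ 2 * t ^ (2 * β - 2) := by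
        refine integral_mono_of_nonneg (ae_of_all _ fun t => sq_nonneg _)
          (hint.mono_set Ioc_subset_Ioi_self)
          ((ae_restrict_iff' measurableSet_Ioc).2 (ae_of_all _ fun t ht => ?_))
        have ht0 : 0 < t := ha.trans ht.1
        calc (k (t + h) - k t) ^ 2 = |k (t + h) - k t| ^ 2 := (sq_abs _).symm
          _ ≤ (A * t ^ (β - 1) * h) ^ 2 := pow_le_pow_left₀ (abs_nonneg _)
              (abs_sub_le_mul_rpow_of_abs_deriv_le hk hdb (by linarith) ht0 hh
                (by linarith [ht.2])) 2
          _ = A ^ 2 * h ^ 2 * t ^ (2 * β - 2) := by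
              rw [show 2 * β - 2 = (β - 1) * 2 by ring, Real.rpow_mul ht0.le, Real.rpow_two]
              ring
    _ ≤ ∫ t in Ioi a, A ^ 2 * h ^ 2 * t ^ (2 * β - 2) :=
        setIntegral_mono_set hint ((ae_restrict_iff' measurableSet_Ioi).2 (ae_of_all _
          fun t ht => mul_nonneg (by positivity) (Real.rpow_nonneg (ha.trans ht).le _)))
          Ioc_subset_Ioi_self.eventuallyLE
    _ = A ^ 2 * h ^ 2 * (a ^ (2 * β - 1) / (1 - 2 * β)) := by
        rw [integral_const_mul, integral_Ioi_rpow_of_lt hp ha,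
          show 2 * β - 2 + 1 = 2 * β - 1 by ring, neg_div, ← div_neg, neg_sub]

lemma setIntegral_sq_sub_le_mul_rpow (hk : DifferentiableOn ℝ k (Ioi 0))
    (hkb : ∀ t ∈ Ioc 0 R, |k t| ≤ C * t ^ β) (hdb : ∀ t ∈ Ioc 0 R, |deriv k t| ≤ A * t ^ (β - 1))
    (hβ : β ∈ Ioo (-1 / 2) (1 / 2)) {h T : ℝ} (hh : 0 < h) (hhT : h ≤ T) (hTR : 3 * T ≤ R) :
    ∫ t in Ioc 0 T, (k (t + h) - k t) ^ 2 ≤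
      (4 * (C ^ 2 / (2 * β + 1)) * 3 ^ (2 * β + 1) + A ^ 2 * 2 ^ (2 * β - 1) / (1 - 2 * β)) *
        h ^ (2 * β + 1) := by
  obtain ⟨hβl, hβu⟩ := hβ
  have hint : IntegrableOn (fun t => (k (t + h) - k t) ^ 2) (Ioc 0 T) :=
    integrableOn_sq_sub_of_abs_le_mul_rpow hk.continuousOn hkb hβl hh (by linarith)
  have hnear : ∀ b, 0 ≤ b → b ≤ 2 * h → ∫ t in Ioc 0 b, (k (t + h) - k t) ^ 2 ≤
      4 * (C ^ 2 / (2 * β + 1)) * 3 ^ (2 * β + 1) * h ^ (2 * β + 1) := by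
    intro b hb hb2
    refine (setIntegral_sq_sub_le_of_abs_le_mul_rpow hk.continuousOn hkb hβl hb hh
      (by linarith)).trans ?_
    have : (b + h) ^ (2 * β + 1) ≤ 3 ^ (2 * β + 1) * h ^ (2 * β + 1) := by
      rw [← Real.mul_rpow zero_le_three hh.le]
      exact Real.rpow_le_rpow (by linarith) (by linarith) (by linarith)
    have : 0 ≤ C ^ 2 / (2 * β + 1) := div_nonneg (sq_nonneg C) (by linarith)
    nlinarith
  have hfar : 0 ≤ A ^ 2 * 2 ^ (2 * β - 1) / (1 - 2 * β) * h ^ (2 * β + 1) :=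
    mul_nonneg (div_nonneg (by positivity) (by linarith)) (Real.rpow_nonneg hh.le _)
  rcases le_or_gt T (2 * h) with hT2 | hT2
  · linarith [hnear T (by linarith) hT2]
  rw [← Ioc_union_Ioc_eq_Ioc (by positivity) hT2.le, setIntegral_union
    (Ioc_disjoint_Ioc_of_le le_rfl) measurableSet_Ioc
    (hint.mono_set (Ioc_subset_Ioc_right hT2.le))
    (hint.mono_set (Ioc_subset_Ioc_left (by positivity)))]
  have htail := setIntegral_sq_sub_le_of_abs_deriv_le hk hdb hβu (a := 2 * h) (b := T)
    (by positivity) hh.le (by linarith)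
  have hpow : A ^ 2 * h ^ 2 * ((2 * h) ^ (2 * β - 1) / (1 - 2 * β)) =
      A ^ 2 * 2 ^ (2 * β - 1) / (1 - 2 * β) * h ^ (2 * β + 1) := by
    rw [Real.mul_rpow zero_le_two hh.le, show 2 * β + 1 = 2 + (2 * β - 1) by ring,
      Real.rpow_add hh, Real.rpow_two]
    ring
  linarith [hnear (2 * h) (by positivity) le_rfl]

theorem exists_integral_sq_add_integral_sq_sub_le_mul_rpow (hk : DifferentiableOn ℝ k (Ioi 0))
    {T : ℝ} (hTR : 3 * T ≤ R) (hkb : ∀ t ∈ Ioc 0 R, |k t| ≤ C * t ^ β)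
    (hdb : ∀ t ∈ Ioc 0 R, |deriv k t| ≤ A * t ^ (β - 1)) (hβ : β ∈ Ioo (-1 / 2) (1 / 2)) :
    ∃ D, ∀ h, 0 < h → h ≤ T →
      IntegrableOn (fun t => k t ^ 2) (Ioc 0 h) ∧
      IntegrableOn (fun t => (k (t + h) - k t) ^ 2) (Ioc 0 T) ∧
      (∫ t in Ioc 0 h, k t ^ 2) + ∫ t in Ioc 0 T, (k (t + h) - k t) ^ 2 ≤
        D * h ^ (2 * β + 1) := by
  refine ⟨C ^ 2 / (2 * β + 1) + (4 * (C ^ 2 / (2 * β + 1)) * 3 ^ (2 * β + 1) +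
    A ^ 2 * 2 ^ (2 * β - 1) / (1 - 2 * β)), fun h hh hhT => ⟨?_, ?_, ?_⟩⟩
  · exact integrableOn_sq_of_abs_le_mul_rpow hk.continuousOn hkb hβ.1 (by linarith)
  · exact integrableOn_sq_sub_of_abs_le_mul_rpow hk.continuousOn hkb hβ.1 hh (by linarith)
  · rw [add_mul]
    exact add_le_add (setIntegral_sq_le_of_abs_le_mul_rpow hkb hβ.1 hh.le (by linarith))
      (setIntegral_sq_sub_le_mul_rpow hk hkb hdb hβ hh hhT hTR)

end Increments

theorem exists_pos_integral_sq_add_integral_sq_sub_le_of_regularlyVarying {k ℓ : ℝ → ℝ}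
    {H ε α T : ℝ} (hk : ContDiffOn ℝ 1 k (Ioi 0))
    (hmono : ∃ δ > 0, MonotoneOn (deriv k) (Ioc 0 δ) ∨ AntitoneOn (deriv k) (Ioc 0 δ))
    (hℓpos : ∀ x, 0 < x → 0 < ℓ x) (hℓ : SlowlyVarying ℓ)
    (hreg : Tendsto (fun t => k t / (t ^ (H - 1 / 2) * ℓ (1 / t))) (𝓝[>] 0) (𝓝 1))
    (hε : 0 < ε) (hεH : ε < H) (hH : H < 1) (hα : α ≤ 2 * H - 2 * ε) (hT : 0 < T) :
    ∃ D > 0, ∀ h, 0 < h → h ≤ T →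
      IntegrableOn (fun t => k t ^ 2) (Ioc 0 h) ∧
      IntegrableOn (fun t => (k (t + h) - k t) ^ 2) (Ioc 0 T) ∧
      (∫ t in Ioc 0 h, k t ^ 2) + ∫ t in Ioc 0 T, (k (t + h) - k t) ^ 2 ≤ D * h ^ α := by
  have hβ : H - 1 / 2 - ε ∈ Ioo (-1 / 2 : ℝ) (1 / 2) := ⟨by linarith, by linarith⟩
  obtain ⟨C₀, hC₀⟩ := hℓ.exists_eventually_le_mul_rpow hℓpos hε
  obtain ⟨C, hC⟩ := exists_forall_Ioc_abs_le_mul_rpow hk.continuousOn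
    (eventually_abs_le_mul_rpow_of_tendsto_div hC₀ hℓpos hreg) (3 * T)
  have hdiff := hk.differentiableOn one_ne_zero
  obtain ⟨A, hA⟩ := exists_forall_Ioc_abs_le_mul_rpow
    (hk.continuousOn_deriv_of_isOpen isOpen_Ioi le_rfl)
    (eventually_abs_deriv_le_mul_rpow hdiff hmono (by positivity) hC
      (abs_le.2 ⟨by linarith [hβ.1], by linarith [hβ.2]⟩)) (3 * T)
  obtain ⟨D, hD⟩ := exists_integral_sq_add_integral_sq_sub_le_mul_rpow hdiff le_rfl hC hA hβ
  refine ⟨max D 1 * T ^ (2 * (H - 1 / 2 - ε) + 1 - α), by positivity, fun h hh hhT => ?_⟩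
  obtain ⟨hint₁, hint₂, hle⟩ := hD h hh hhT
  refine ⟨hint₁, hint₂, hle.trans ?_⟩
  rw [mul_assoc]
  exact mul_le_mul (le_max_left _ _) (rpow_le_rpow_sub_mul_rpow hh hhT (by linarith))
    (Real.rpow_nonneg hh.le _) (by positivity)

lemma opNorm_sq_le_sum_sq {n m : ℕ} (A : Matrix (Fin n) (Fin m) ℝ) :
    opNorm A ^ 2 ≤ ∑ i, ∑ j, A i j ^ 2 := by
  have hbound : opNorm A ≤ √(∑ i, ∑ j, A i j ^ 2) := by
    refine Real.sSup_le ?_ (Real.sqrt_nonneg _)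
    rintro r ⟨x, hx, rfl⟩
    refine Real.sqrt_le_sqrt (Finset.sum_le_sum fun i _ => ?_)
    simpa [mulVec, dotProduct, hx] using Finset.sum_mul_sq_le_sq_mul_sq Finset.univ (A i) x
  have hnonneg : 0 ≤ opNorm A :=
    Real.sSup_nonneg (by rintro r ⟨x, -, rfl⟩; exact Real.sqrt_nonneg _)
  calc opNorm A ^ 2 ≤ √(∑ i, ∑ j, A i j ^ 2) ^ 2 := pow_le_pow_left₀ hnonneg hbound 2
    _ = ∑ i, ∑ j, A i j ^ 2 := Real.sq_sqrt (by positivity)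

lemma opNorm_diagonal_sq_le {n : ℕ} (v : Fin n → ℝ) :
    opNorm (diagonal v) ^ 2 ≤ ∑ i, v i ^ 2 := by
  simpa [diagonal_apply, ite_pow] using opNorm_sq_le_sum_sq (diagonal v)

lemma setIntegral_opNorm_diagonal_sq_le {n : ℕ} {s : Set ℝ} {v : ℝ → Fin n → ℝ}
    (hv : ∀ j, IntegrableOn (fun t => v t j ^ 2) s) :
    ∫ t in s, opNorm (diagonal (v t)) ^ 2 ≤ ∑ j, ∫ t in s, v t j ^ 2 := by
  rw [← integral_finsetSum _ fun j _ => hv j]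
  exact integral_mono_of_nonneg (ae_of_all _ fun t => sq_nonneg _)
    (integrable_finsetSum _ fun j _ => hv j) (ae_of_all _ fun t => opNorm_diagonal_sq_le _)

theorem stmt7_general (d : ℕ) (k : Fin (d + 1) → ℝ → ℝ) (H : Fin (d + 1) → ℝ)
    (ℓ : Fin (d + 1) → ℝ → ℝ)
    (hH : ∀ j, H j ∈ Ioo (0 : ℝ) 1)
    (hk : ∀ j, ContDiffOn ℝ 1 (k j) (Ioi 0))
    (hmono : ∀ j, ∃ δ > 0,
      MonotoneOn (deriv (k j)) (Ioc 0 δ) ∨ AntitoneOn (deriv (k j)) (Ioc 0 δ))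
    (hℓpos : ∀ j, ∀ x : ℝ, 0 < x → 0 < ℓ j x)
    (hℓsv : ∀ j, SlowlyVarying (ℓ j))
    (hreg : ∀ j, Tendsto (fun t => k j t / (t ^ (H j - 1 / 2) * ℓ j (1 / t)))
      (nhdsWithin 0 (Ioi 0)) (nhds 1)) :
    ∀ T : ℝ, 0 < T → ∃ ε₀ > 0, ∀ ε : ℝ, 0 < ε → ε < ε₀ → ∃ C > 0,
      ∀ h : ℝ, 0 < h → h ≤ T →
        (∫ t in Ioc (0 : ℝ) h, (opNorm (Matrix.diagonal fun j => k j t)) ^ 2) +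
          (∫ t in Ioc (0 : ℝ) T,
            (opNorm (Matrix.diagonal fun j => k j (t + h) - k j t)) ^ 2) ≤
        C * h ^ (2 * Finset.univ.inf' Finset.univ_nonempty H - 2 * ε) := by
  intro T hT
  set Hmin := Finset.univ.inf' Finset.univ_nonempty H
  have hHmin : ∀ j, Hmin ≤ H j := fun j => Finset.inf'_le H (Finset.mem_univ j)
  refine ⟨Hmin, (Finset.lt_inf'_iff _).2 fun j _ => (hH j).1, fun ε hε hεH => ?_⟩
  choose D hD hbound using fun j =>
    exists_pos_integral_sq_add_integral_sq_sub_le_of_regularlyVarying (α := 2 * Hmin - 2 * ε)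
      (hk j) (hmono j) (hℓpos j) (hℓsv j) (hreg j) hε (hεH.trans_le (hHmin j)) (hH j).2
      (by linarith [hHmin j]) hT
  refine ⟨∑ j, D j, Finset.sum_pos (fun j _ => hD j) Finset.univ_nonempty, fun h hh hhT => ?_⟩
  calc _ ≤ (∑ j, ∫ t in Ioc 0 h, k j t ^ 2) + ∑ j, ∫ t in Ioc 0 T, (k j (t + h) - k j t) ^ 2 :=
        add_le_add (setIntegral_opNorm_diagonal_sq_le fun j => (hbound j h hh hhT).1)
          (setIntegral_opNorm_diagonal_sq_le fun j => (hbound j h hh hhT).2.1)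
    _ ≤ ∑ j, D j * h ^ (2 * Hmin - 2 * ε) := by
        rw [← Finset.sum_add_distrib]
        exact Finset.sum_le_sum fun j _ => (hbound j h hh hhT).2.2
    _ = (∑ j, D j) * h ^ (2 * Hmin - 2 * ε) := (Finset.sum_mul ..).symm

/-- `L²`-increment bounds for a diagonal matrix kernel
`K(t) = diag(k_1(t), …, k_d(t))` whose entries are regularly varying at `0` with indices
`H_j − 1/2`, `H_j ∈ (0,1)`: for every `T > 0` and all sufficiently small `ε > 0` there is
`C > 0` with `∫_0^h ‖K(t)‖² dt + ∫_0^T ‖K(t+h) − K(t)‖² dt ≤ C h^{2 H_min − 2ε}` for all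
`h ∈ (0,T]`. -/
theorem stmt7 (d : ℕ) (k : Fin (d + 1) → ℝ → ℝ) (H : Fin (d + 1) → ℝ)
    (ℓ : Fin (d + 1) → ℝ → ℝ)
    (hH : ∀ j, H j ∈ Ioo (0 : ℝ) 1)
    (hk : ∀ j, ContDiffOn ℝ 1 (k j) (Ioi 0))
    (hmono : ∀ j, ∃ δ > 0,
      MonotoneOn (deriv (k j)) (Ioc 0 δ) ∨ AntitoneOn (deriv (k j)) (Ioc 0 δ))
    (hℓpos : ∀ j, ∀ x : ℝ, 0 < x → 0 < ℓ j x)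
    (hℓsv : ∀ j, SlowlyVarying (ℓ j))
    (hreg : ∀ j, Tendsto (fun t => k j t / (t ^ (H j - 1 / 2) * ℓ j (1 / t)))
      (nhdsWithin 0 (Ioi 0)) (nhds 1))
    (hint : ∀ j, IntegrableOn (fun t => (deriv (k j) t) ^ 2) (Ioi 1)) :
    ∀ T : ℝ, 0 < T → ∃ ε₀ > 0, ∀ ε : ℝ, 0 < ε → ε < ε₀ → ∃ C > 0,
      ∀ h : ℝ, 0 < h → h ≤ T →
        (∫ t in Ioc (0 : ℝ) h, (opNorm (Matrix.diagonal fun j => k j t)) ^ 2) +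
          (∫ t in Ioc (0 : ℝ) T,
            (opNorm (Matrix.diagonal fun j => k j (t + h) - k j t)) ^ 2) ≤
        C * h ^ (2 * Finset.univ.inf' Finset.univ_nonempty H - 2 * ε) :=
  stmt7_general d k H ℓ hH hk hmono hℓpos hℓsv hreg
end

section
/- Let d ≥ 1, and for each j ∈ {1,…,d} let k_j : (0,∞) → ℝ be continuously differentiable with k_j' monotone on some right-neighborhood of 0, such that lim_{t→0+} k_j(t)/(t^{H_j − 1/2} ℓ_j(1/t)) = 1 for some H_j ∈ (0,1) and some slowly varying function ℓ_j : (0,∞) → (0,∞). Set K(t) = diag(k_1(t), …, k_d(t)) and H_min = min_j H_j. Then for every η > 2 − 2 H_min one has ∫_0^1 ‖K'(t)‖² t^η dt < ∞, where K'(t) = diag(k_1'(t), …, k_d'(t)) and ‖·‖ denotes the matrix operator norm. -/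
/-
Each entry satisfies `k_j(t) ~ t^(H_j - 1/2) ℓ_j(1/t)` as `t → 0+`, and Potter's bound
`ℓ_j(x) = O(x^ε)` (doubling `x` costs at most a factor `2^ε` for large `x`) gives
`k_j(t) = O(t^(H_j - 1/2 - ε))`. Since `k_j'` is monotone near `0`, the mean value theorem on
`[t/2, t]` and `[t, 2t]` bounds `|k_j'(t)|` by `(2/t)(|k_j(t/2)| + |k_j(t)| + |k_j(2t)|)`,
so `k_j'(t) = O(t^(H_j - 3/2 - ε))`. The operator norm of a diagonal matrix is the largest
modulus of its entries, hence `‖K'(t)‖² t^η = O(t^(2 H_min - 3 - 2ε + η))`, which is integrable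
at `0` for `ε` small.
-/

open MeasureTheory Filter Set Matrix

open Asymptotics
open scoped Topology

theorem opNorm_diagonal {n : ℕ} (v : Fin n → ℝ) : opNorm (diagonal v) = ‖v‖ := by
  have hle : ∀ x : Fin n → ℝ, ∑ i, x i ^ 2 = 1 →
      √(∑ i, (diagonal v *ᵥ x) i ^ 2) ≤ ‖v‖ := by
    intro x hx
    refine Real.sqrt_le_iff.2 ⟨norm_nonneg v, ?_⟩
    calc ∑ i, (diagonal v *ᵥ x) i ^ 2 = ∑ i, v i ^ 2 * x i ^ 2 := by
          simp only [mulVec_diagonal, mul_pow]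
      _ ≤ ∑ i, ‖v‖ ^ 2 * x i ^ 2 := by
          refine Finset.sum_le_sum fun i _ => mul_le_mul_of_nonneg_right ?_ (sq_nonneg _)
          simpa using pow_le_pow_left₀ (norm_nonneg _) (norm_le_pi_norm v i) 2
      _ = ‖v‖ ^ 2 := by rw [← Finset.mul_sum, hx, mul_one]
  have hbdd : BddAbove {r : ℝ | ∃ x : Fin n → ℝ, (∑ i, x i ^ 2) = 1 ∧
      r = √(∑ i, (diagonal v *ᵥ x) i ^ 2)} := ⟨‖v‖, by rintro r ⟨x, hx, rfl⟩; exact hle x hx⟩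
  refine le_antisymm (Real.sSup_le (by rintro r ⟨x, hx, rfl⟩; exact hle x hx) (norm_nonneg v)) ?_
  refine (pi_norm_le_iff_of_nonneg (Real.sSup_nonneg ?_)).2 fun j =>
    le_csSup hbdd ⟨Pi.single j 1, ?_, ?_⟩
  · rintro r ⟨x, -, rfl⟩; exact Real.sqrt_nonneg _
  · simp [Pi.single_apply]
  · simp [mulVec_diagonal, Pi.single_apply, Real.sqrt_sq_eq_abs]

theorem le_mul_div_rpow_of_doubling {g : ℝ → ℝ} {X M ε : ℝ} (hX : 0 < X) (hε : 0 ≤ ε)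
    (hM : 0 ≤ M) (hdouble : ∀ x ≥ X, g (2 * x) ≤ 2 ^ ε * g x)
    (hbdd : ∀ x ∈ Ico X (2 * X), g x ≤ M) :
    ∀ x ≥ X, g x ≤ M * (x / X) ^ ε := by
  have hdyadic : ∀ n : ℕ, ∀ x ∈ Ico X (2 ^ n * X), g x ≤ M * (x / X) ^ ε := by
    intro n
    induction n with
    | zero =>
      rintro x ⟨hXx, hx⟩
      rw [pow_zero, one_mul] at hx
      exact absurd hXx hx.not_ge
    | succ n ih =>
      rintro x ⟨hXx, hx⟩
      by_cases hx2 : x < 2 * X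
      · calc g x ≤ M := hbdd x ⟨hXx, hx2⟩
          _ ≤ M * (x / X) ^ ε :=
            le_mul_of_one_le_right hM (Real.one_le_rpow ((one_le_div hX).2 hXx) hε)
      · have hhalf : x / 2 ∈ Ico X (2 ^ n * X) :=
          ⟨by linarith, by rw [pow_succ] at hx; linarith⟩
        calc g x = g (2 * (x / 2)) := by rw [mul_div_cancel₀ x two_ne_zero]
          _ ≤ 2 ^ ε * (M * (x / 2 / X) ^ ε) :=
            (hdouble _ hhalf.1).trans (by gcongr; exact ih _ hhalf)
          _ = M * (2 * (x / 2 / X)) ^ ε := by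
            rw [Real.mul_rpow zero_le_two (div_nonneg (by linarith) hX.le)]; ring
          _ = M * (x / X) ^ ε := by ring_nf
  intro x hx
  obtain ⟨n, hn⟩ := pow_unbounded_of_one_lt (x / X) one_lt_two
  exact hdyadic n x ⟨hx, (div_lt_iff₀ hX).1 hn⟩

theorem SlowlyVarying.eventually_le_two_rpow_mul {ℓ : ℝ → ℝ} (hℓ : SlowlyVarying ℓ)
    (hpos : ∀ x, 0 < x → 0 < ℓ x) {ε : ℝ} (hε : 0 < ε) :
    ∀ᶠ x in atTop, ℓ (2 * x) ≤ 2 ^ ε * ℓ x := by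
  filter_upwards [(hℓ.2 2 two_pos).eventually_lt_const (Real.one_lt_rpow one_lt_two hε),
    eventually_gt_atTop 0] with x hx hx0
  exact ((div_lt_iff₀ (hpos x hx0)).1 hx).le

/- The continuous majorant `b` stands in for local boundedness of `ℓ` far out, which for a
merely measurable slowly varying function would need the uniform convergence theorem. -/
theorem SlowlyVarying.isBigO_rpow {ℓ b : ℝ → ℝ} (hℓ : SlowlyVarying ℓ)
    (hpos : ∀ x, 0 < x → 0 < ℓ x) {ε : ℝ} (hε : 0 < ε) (hb : ContinuousOn b (Ioi 0))
    (hℓb : ℓ =O[atTop] b) : ℓ =O[atTop] fun x => x ^ ε := by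
  obtain ⟨C, hC⟩ := hℓb.bound
  obtain ⟨X₀, hX₀⟩ := eventually_atTop.1 ((hℓ.eventually_le_two_rpow_mul hpos hε).and hC)
  set X := max X₀ 1
  have hX : 0 < X := zero_lt_one.trans_le (le_max_right _ _)
  obtain ⟨M, hM⟩ := isCompact_Icc.exists_bound_of_continuousOn
    ((continuousOn_const (c := C).mul hb.norm).mono fun x hx => hX.trans_le hx.1 :
      ContinuousOn (fun x => C * ‖b x‖) (Icc X (2 * X)))
  have hM0 : 0 ≤ M := (norm_nonneg _).trans (hM X ⟨le_rfl, by linarith⟩)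
  have hbdd : ∀ x ∈ Ico X (2 * X), ℓ x ≤ M := fun x hx =>
    calc ℓ x ≤ ‖ℓ x‖ := le_abs_self _
      _ ≤ C * ‖b x‖ := (hX₀ x (le_max_left _ _ |>.trans hx.1)).2
      _ ≤ M := (le_abs_self _).trans (hM x (Ico_subset_Icc_self hx))
  have hpotter := le_mul_div_rpow_of_doubling hX hε.le hM0
    (fun x hx => (hX₀ x (le_max_left _ _ |>.trans hx)).1) hbdd
  refine IsBigO.of_bound (M / X ^ ε) (eventually_atTop.2 ⟨X, fun x hx => ?_⟩)
  have hx0 : 0 < x := hX.trans_le hx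
  rw [Real.norm_of_nonneg (hpos x hx0).le, Real.norm_of_nonneg (by positivity),
    div_mul_eq_mul_div, mul_div_assoc, ← Real.div_rpow hx0.le hX.le]
  exact hpotter x hx

theorem isBigO_rpow_sub_of_tendsto_div {k ℓ : ℝ → ℝ} {ρ ε : ℝ} (hk : ContinuousOn k (Ioi 0))
    (hℓ : SlowlyVarying ℓ) (hpos : ∀ x, 0 < x → 0 < ℓ x) (hε : 0 < ε)
    (hreg : Tendsto (fun t => k t / (t ^ ρ * ℓ (1 / t))) (𝓝[>] 0) (𝓝 1)) :
    k =O[𝓝[>] 0] fun t => t ^ (ρ - ε) := by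
  have hequiv : k ~[𝓝[>] 0] fun t => t ^ ρ * ℓ (1 / t) := isEquivalent_of_tendsto_one hreg
  have hℓb : ℓ =O[atTop] fun x => x ^ ρ * k x⁻¹ := by
    refine ((isBigO_refl (fun x : ℝ => x ^ ρ) atTop).mul
      (hequiv.symm.isBigO.comp_tendsto tendsto_inv_atTop_nhdsGT_zero)).congr' ?_ .rfl
    filter_upwards [eventually_gt_atTop 0] with x hx
    simp only [Function.comp_apply, one_div, inv_inv, Real.inv_rpow hx.le, ← mul_assoc,
      mul_inv_cancel₀ (Real.rpow_pos_of_pos hx ρ).ne', one_mul]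
  have hb : ContinuousOn (fun x : ℝ => x ^ ρ * k x⁻¹) (Ioi 0) :=
    (continuousOn_id.rpow_const fun x hx => Or.inl (ne_of_gt hx)).mul
      (hk.comp (continuousOn_inv₀.mono fun x hx => ne_of_gt hx) fun x (hx : 0 < x) => inv_pos.2 hx)
  have hℓ0 : (fun t => ℓ (1 / t)) =O[𝓝[>] 0] fun t => t⁻¹ ^ ε := by
    simpa only [one_div, Function.comp_def] using
      (hℓ.isBigO_rpow hpos hε hb hℓb).comp_tendsto tendsto_inv_nhdsGT_zero
  refine (hequiv.isBigO.trans ((isBigO_refl _ _).mul hℓ0)).trans_eventuallyEq ?_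
  filter_upwards [self_mem_nhdsWithin] with t ht
  rw [Real.inv_rpow (le_of_lt ht), Real.rpow_sub ht, div_eq_mul_inv]

theorem abs_deriv_le_of_monotoneOn {k : ℝ → ℝ} {δ t : ℝ} (hk : DifferentiableOn ℝ k (Ioi 0))
    (hmono : MonotoneOn (deriv k) (Ioc 0 δ)) (ht : 0 < t) (htδ : 2 * t ≤ δ) :
    |deriv k t| ≤ 2 / t * (|k (t / 2)| + |k t| + |k (2 * t)|) := by
  have hslope : ∀ a b, 0 < a → a < b → ∃ c ∈ Ioo a b, deriv k c = (k b - k a) / (b - a) :=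
    fun a b ha hab => exists_deriv_eq_slope k hab
      (hk.continuousOn.mono fun x hx => ha.trans_le hx.1) (hk.mono fun x hx => ha.trans hx.1)
  obtain ⟨c, hc, hc_eq⟩ := hslope t (2 * t) ht (by linarith)
  obtain ⟨c', hc', hc'_eq⟩ := hslope (t / 2) t (by positivity) (by linarith)
  have hup : t * deriv k t ≤ k (2 * t) - k t := by
    have := hmono ⟨ht, by linarith⟩ ⟨ht.trans hc.1, by linarith [hc.2]⟩ hc.1.le
    rw [hc_eq, show 2 * t - t = t by ring, le_div_iff₀ ht] at this
    linarith
  have hlo : k t - k (t / 2) ≤ t / 2 * deriv k t := by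
    have := hmono ⟨by linarith [hc'.1], by linarith [hc'.2]⟩ ⟨ht, by linarith⟩ hc'.2.le
    rw [hc'_eq, show t - t / 2 = t / 2 by ring, div_le_iff₀ (by positivity)] at this
    linarith
  have hprod : |t * deriv k t| ≤ 2 * (|k (t / 2)| + |k t| + |k (2 * t)|) := by
    rw [abs_le]
    constructor <;>
      linarith [le_abs_self (k t), neg_abs_le (k t), le_abs_self (k (t / 2)),
        neg_abs_le (k (t / 2)), le_abs_self (k (2 * t)), neg_abs_le (k (2 * t))]
  rw [abs_mul, abs_of_pos ht] at hprod
  rw [div_mul_eq_mul_div, le_div_iff₀ ht, mul_comm]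
  exact hprod

theorem isBigO_rpow_comp_const_mul {k : ℝ → ℝ} {p c : ℝ} (hc : 0 < c)
    (hk : k =O[𝓝[>] 0] fun t => t ^ p) : (fun t => k (c * t)) =O[𝓝[>] 0] fun t => t ^ p := by
  refine (hk.comp_tendsto (tendsto_iff_comap.2 (comap_mulLeft_nhdsGT_zero hc).ge)).trans
    ((isBigO_const_mul_self (c ^ p) _ _).congr' ?_ .rfl)
  filter_upwards [self_mem_nhdsWithin] with t ht
  exact (Real.mul_rpow hc.le (le_of_lt ht)).symm

theorem deriv_isBigO_rpow_sub_one_of_monotoneOn {k : ℝ → ℝ} {δ p : ℝ}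
    (hk : DifferentiableOn ℝ k (Ioi 0)) (hδ : 0 < δ) (hmono : MonotoneOn (deriv k) (Ioc 0 δ))
    (hO : k =O[𝓝[>] 0] fun t => t ^ p) : deriv k =O[𝓝[>] 0] fun t => t ^ (p - 1) := by
  have hsum : (fun t => |k (t / 2)| + |k t| + |k (2 * t)|) =O[𝓝[>] 0] fun t => t ^ p := by
    have hhalf := isBigO_rpow_comp_const_mul (inv_pos.2 two_pos) hO
    simp only [inv_mul_eq_div] at hhalf
    exact (hhalf.norm_left.add hO.norm_left).add (isBigO_rpow_comp_const_mul two_pos hO).norm_left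
  have hbound : deriv k =O[𝓝[>] 0] fun t => 2 / t * (|k (t / 2)| + |k t| + |k (2 * t)|) := by
    refine IsBigO.of_bound 1 ?_
    filter_upwards [Ioo_mem_nhdsGT (half_pos hδ)] with t ht
    rw [one_mul, Real.norm_eq_abs]
    exact (abs_deriv_le_of_monotoneOn hk hmono ht.1 (by linarith [ht.2])).trans (le_abs_self _)
  refine (hbound.trans (((isBigO_const_mul_self 2 (fun t : ℝ => t⁻¹) _).congr' ?_ .rfl).mul
    hsum)).trans_eventuallyEq ?_
  all_goals filter_upwards [self_mem_nhdsWithin] with t (ht : 0 < t)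
  · exact div_eq_mul_inv 2 t |>.symm
  · rw [Real.rpow_sub_one ht.ne', div_eq_inv_mul]

theorem deriv_isBigO_rpow_sub_one {k : ℝ → ℝ} {p : ℝ} (hk : DifferentiableOn ℝ k (Ioi 0))
    (hmono : ∃ δ > 0, MonotoneOn (deriv k) (Ioc 0 δ) ∨ AntitoneOn (deriv k) (Ioc 0 δ))
    (hO : k =O[𝓝[>] 0] fun t => t ^ p) : deriv k =O[𝓝[>] 0] fun t => t ^ (p - 1) := by
  obtain ⟨δ, hδ, hmono | hanti⟩ := hmono
  · exact deriv_isBigO_rpow_sub_one_of_monotoneOn hk hδ hmono hO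
  · have := deriv_isBigO_rpow_sub_one_of_monotoneOn hk.neg hδ
      (by rw [deriv.neg']; exact hanti.neg) hO.neg_left
    simpa only [deriv.neg', neg_neg] using this.neg_left

theorem integrableOn_Ioc_of_isBigO_rpow {f : ℝ → ℝ} {q b : ℝ} (hq : -1 < q) (hb : 0 < b)
    (hf : ContinuousOn f (Ioc 0 b)) (hO : f =O[𝓝[>] 0] fun t => t ^ q) :
    IntegrableOn f (Ioc 0 b) := by
  obtain ⟨s, hs, hfs⟩ := hO.integrableAtFilter
    ⟨Ioc 0 b, Ioc_mem_nhdsGT hb, hf.aestronglyMeasurable measurableSet_Ioc⟩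
    ⟨Ioo 0 1, Ioo_mem_nhdsGT one_pos, (intervalIntegral.integrableOn_Ioo_rpow_iff one_pos).2 hq⟩
  obtain ⟨c, hc, hcs⟩ := mem_nhdsGT_iff_exists_Ioo_subset.1 hs
  have hc2 : (0 : ℝ) < c / 2 := half_pos hc
  refine ((hfs.mono_set hcs).union
    (hf.mono fun t ht => ⟨hc2.trans_le ht.1, ht.2⟩).integrableOn_Icc).mono_set ?_
  intro t ht
  by_cases htc : t < c
  · exact Or.inl ⟨ht.1, htc⟩
  · exact Or.inr ⟨by linarith, ht.2⟩

theorem isBigO_rpow_nhdsGT_zero_of_le {a b : ℝ} (hab : a ≤ b) :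
    (fun t : ℝ => t ^ b) =O[𝓝[>] 0] fun t => t ^ a := by
  refine IsBigO.of_bound 1 ?_
  filter_upwards [Ioo_mem_nhdsGT one_pos] with t ht
  rw [one_mul, Real.norm_of_nonneg (Real.rpow_nonneg ht.1.le b),
    Real.norm_of_nonneg (Real.rpow_nonneg ht.1.le a)]
  exact Real.rpow_le_rpow_of_exponent_ge ht.1 ht.2.le hab

theorem stmt8_general (d : ℕ) (k : Fin (d + 1) → ℝ → ℝ) (H : Fin (d + 1) → ℝ)
    (ℓ : Fin (d + 1) → ℝ → ℝ)
    (hk : ∀ j, ContDiffOn ℝ 1 (k j) (Ioi 0))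
    (hmono : ∀ j, ∃ δ > 0,
      MonotoneOn (deriv (k j)) (Ioc 0 δ) ∨ AntitoneOn (deriv (k j)) (Ioc 0 δ))
    (hℓpos : ∀ j, ∀ x : ℝ, 0 < x → 0 < ℓ j x)
    (hℓsv : ∀ j, SlowlyVarying (ℓ j))
    (hreg : ∀ j, Tendsto (fun t => k j t / (t ^ (H j - 1 / 2) * ℓ j (1 / t)))
      (nhdsWithin 0 (Ioi 0)) (nhds 1)) :
    ∀ η : ℝ, 2 - 2 * Finset.univ.inf' Finset.univ_nonempty H < η →
      IntegrableOn
        (fun t => (opNorm (Matrix.diagonal fun j => deriv (k j) t)) ^ 2 * t ^ η)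
        (Ioc (0 : ℝ) 1) := by
  intro η hη
  set Hmin := Finset.univ.inf' Finset.univ_nonempty H
  obtain ⟨ε, hε, hεη⟩ : ∃ ε > 0, 2 - 2 * Hmin + 4 * ε < η :=
    ⟨(η - (2 - 2 * Hmin)) / 8, by linarith, by linarith⟩
  have hderiv : ∀ j, deriv (k j) =O[𝓝[>] 0] fun t => t ^ (Hmin - 1 / 2 - ε - 1) := fun j =>
    (deriv_isBigO_rpow_sub_one ((hk j).differentiableOn one_ne_zero) (hmono j)
      (isBigO_rpow_sub_of_tendsto_div (hk j).continuousOn (hℓsv j) (hℓpos j) hε (hreg j))).trans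
      (isBigO_rpow_nhdsGT_zero_of_le (by linarith [Finset.inf'_le H (Finset.mem_univ j)]))
  have hcont : ContinuousOn (fun t j => deriv (k j) t) (Ioi 0) :=
    continuousOn_pi.2 fun j => (hk j).continuousOn_deriv_of_isOpen isOpen_Ioi le_rfl
  simp_rw [opNorm_diagonal]
  refine integrableOn_Ioc_of_isBigO_rpow (q := 2 * (Hmin - 1 / 2 - ε - 1) + η) (by linarith)
    one_pos
    (((hcont.norm.pow 2).mul (continuousOn_id.rpow_const fun t ht => Or.inl (ne_of_gt ht))).mono
      Ioc_subset_Ioi_self)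
    ((((isBigO_pi.2 hderiv).norm_left.pow 2).mul (isBigO_refl _ _)).trans_eventuallyEq ?_)
  filter_upwards [self_mem_nhdsWithin] with t (ht : 0 < t)
  rw [← Real.rpow_natCast, ← Real.rpow_mul ht.le, ← Real.rpow_add ht, Nat.cast_ofNat, mul_comm]

/-- weighted square-integrability of the derivative of a diagonal matrix
kernel `K(t) = diag(k_1(t), …, k_d(t))` whose entries are regularly varying at `0` with
indices `H_j − 1/2`, `H_j ∈ (0,1)`: for every `η > 2 − 2 H_min` one has
`∫_0^1 ‖K'(t)‖² t^η dt < ∞`. -/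
theorem stmt8 (d : ℕ) (k : Fin (d + 1) → ℝ → ℝ) (H : Fin (d + 1) → ℝ)
    (ℓ : Fin (d + 1) → ℝ → ℝ)
    (hH : ∀ j, H j ∈ Ioo (0 : ℝ) 1)
    (hk : ∀ j, ContDiffOn ℝ 1 (k j) (Ioi 0))
    (hmono : ∀ j, ∃ δ > 0,
      MonotoneOn (deriv (k j)) (Ioc 0 δ) ∨ AntitoneOn (deriv (k j)) (Ioc 0 δ))
    (hℓpos : ∀ j, ∀ x : ℝ, 0 < x → 0 < ℓ j x)
    (hℓsv : ∀ j, SlowlyVarying (ℓ j))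
    (hreg : ∀ j, Tendsto (fun t => k j t / (t ^ (H j - 1 / 2) * ℓ j (1 / t)))
      (nhdsWithin 0 (Ioi 0)) (nhds 1)) :
    ∀ η : ℝ, 2 - 2 * Finset.univ.inf' Finset.univ_nonempty H < η →
      IntegrableOn
        (fun t => (opNorm (Matrix.diagonal fun j => deriv (k j) t)) ^ 2 * t ^ η)
        (Ioc (0 : ℝ) 1) :=
  stmt8_general d k H ℓ hk hmono hℓpos hℓsv hreg
end

section
/- Let k, k̃ : [0,∞) → ℝ be continuously differentiable with k(0) ≠ 0 and k̃(0) ≠ 0. For h > 0 define the symmetric positive semidefinite 2×2 matrix M(h) = ∫_0^h [[k(r)², k(r) k̃(r)], [k(r) k̃(r), k̃(r)²]] dr. Then the smallest eigenvalue of M(h) satisfies λ_min(M(h)) = O(h²) as h → 0+; that is, there exist C > 0 and h₀ > 0 such that λ_min(M(h)) ≤ C h² for all h ∈ (0, h₀). -/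
open MeasureTheory Set Matrix

/-!
Let `ξ` be a unit vector orthogonal to `(k 0, k̃ 0)`. Then `ξᵀ M(h) ξ = ∫₀ʰ φ²` with
`φ = ξ₀ k + ξ₁ k̃`, and `φ` is `C¹` with `φ 0 = 0`, hence `|φ r| ≤ K r` near `0`. So
`λ_min(M(h)) ≤ ξᵀ M(h) ξ ≤ K² h³ / 3`.
-/

theorem lambdaMin_le_dotProduct_mulVec {n : Type*} [Fintype n] {M : Matrix n n ℝ}
    (hM : ∀ η, 0 ≤ η ⬝ᵥ M *ᵥ η) {ξ : n → ℝ} (hξ : ∑ i, ξ i ^ 2 = 1) :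
    lambdaMin M ≤ ξ ⬝ᵥ M *ᵥ ξ :=
  csInf_le ⟨0, by rintro _ ⟨η, -, rfl⟩; exact hM η⟩ ⟨ξ, hξ, rfl⟩

theorem exists_sum_sq_eq_one_and_orthogonal (s t : ℝ) :
    ∃ ξ : Fin 2 → ℝ, ∑ i, ξ i ^ 2 = 1 ∧ ξ 0 * s + ξ 1 * t = 0 := by
  by_cases hst : s ^ 2 + t ^ 2 = 0
  · have hs : s = 0 := by nlinarith [sq_nonneg s, sq_nonneg t]
    have ht : t = 0 := by nlinarith [sq_nonneg s, sq_nonneg t]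
    exact ⟨![1, 0], by simp, by simp [hs, ht]⟩
  · have hN : 0 < √(s ^ 2 + t ^ 2) := Real.sqrt_pos.2 (by positivity)
    refine ⟨![t / √(s ^ 2 + t ^ 2), -s / √(s ^ 2 + t ^ 2)], ?_, ?_⟩
    · simp only [Fin.sum_univ_two, cons_val_zero, cons_val_one, div_pow, neg_sq,
        Real.sq_sqrt (by positivity : 0 ≤ s ^ 2 + t ^ 2)]
      field_simp
      ring
    · simp only [cons_val_zero, cons_val_one]
      ring

section Gram

variable {α : Type*} [MeasurableSpace α] (μ : Measure α) (f g : α → ℝ)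

noncomputable def gramL2 : Matrix (Fin 2) (Fin 2) ℝ :=
  !![∫ x, f x ^ 2 ∂μ, ∫ x, f x * g x ∂μ; ∫ x, f x * g x ∂μ, ∫ x, g x ^ 2 ∂μ]

variable {μ f g}

theorem dotProduct_gramL2_mulVec (hf : Integrable (fun x => f x ^ 2) μ)
    (hfg : Integrable (fun x => f x * g x) μ) (hg : Integrable (fun x => g x ^ 2) μ)
    (ξ : Fin 2 → ℝ) :
    ξ ⬝ᵥ gramL2 μ f g *ᵥ ξ = ∫ x, (ξ 0 * f x + ξ 1 * g x) ^ 2 ∂μ := by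
  have hexpand : (fun x => (ξ 0 * f x + ξ 1 * g x) ^ 2) = fun x =>
      ξ 0 ^ 2 * f x ^ 2 + 2 * (ξ 0 * ξ 1) * (f x * g x) + ξ 1 ^ 2 * g x ^ 2 := by
    funext x
    ring
  rw [hexpand, integral_add ?_ (hg.const_mul _), integral_add (hf.const_mul _) (hfg.const_mul _),
    integral_const_mul, integral_const_mul, integral_const_mul]
  · simp only [gramL2, dotProduct, mulVec, Fin.sum_univ_two, of_apply, cons_val', cons_val_zero,
      cons_val_one, empty_val', cons_val_fin_one]
    ring
  · exact (hf.const_mul _).add (hfg.const_mul _)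

theorem lambdaMin_gramL2_le (hf : Integrable (fun x => f x ^ 2) μ)
    (hfg : Integrable (fun x => f x * g x) μ) (hg : Integrable (fun x => g x ^ 2) μ)
    {ξ : Fin 2 → ℝ} (hξ : ∑ i, ξ i ^ 2 = 1) :
    lambdaMin (gramL2 μ f g) ≤ ∫ x, (ξ 0 * f x + ξ 1 * g x) ^ 2 ∂μ := by
  rw [← dotProduct_gramL2_mulVec hf hfg hg]
  refine lambdaMin_le_dotProduct_mulVec (fun η => ?_) hξ
  rw [dotProduct_gramL2_mulVec hf hfg hg]
  exact integral_nonneg fun x => sq_nonneg _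

end Gram

theorem ContDiffWithinAt.exists_norm_sub_le_mul_of_Ici {E : Type*} [NormedAddCommGroup E]
    [NormedSpace ℝ E] {F : ℝ → E} {a : ℝ} (hF : ContDiffWithinAt ℝ 1 F (Ici a) a) :
    ∃ K : ℝ, ∃ b > a, ∀ r ∈ Icc a b, ‖F r - F a‖ ≤ K * (r - a) := by
  obtain ⟨K, u, hu, hK⟩ := hF.exists_lipschitzOnWith (convex_Ici a)
  obtain ⟨b, hab, hbu⟩ := mem_nhdsGE_iff_exists_Icc_subset.1 hu
  refine ⟨K, b, hab, fun r hr => ?_⟩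
  have := hK.dist_le_mul r (hbu hr) a (hbu ⟨le_rfl, hab.le⟩)
  rwa [dist_eq_norm, Real.dist_eq, abs_of_nonneg (sub_nonneg.2 hr.1)] at this

theorem setIntegral_Ioc_sq_le_of_abs_le_mul {φ : ℝ → ℝ} {K h : ℝ} (hh : 0 ≤ h)
    (hφ : IntegrableOn (fun r => φ r ^ 2) (Ioc 0 h)) (hK : ∀ r ∈ Ioc 0 h, |φ r| ≤ K * r) :
    ∫ r in Ioc 0 h, φ r ^ 2 ≤ K ^ 2 * h ^ 3 / 3 := by
  calc ∫ r in Ioc 0 h, φ r ^ 2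
      ≤ ∫ r in Ioc 0 h, K ^ 2 * r ^ 2 := by
        refine setIntegral_mono_on hφ (Continuous.integrableOn_Ioc (by fun_prop))
          measurableSet_Ioc fun r hr => ?_
        rw [← mul_pow, ← sq_abs]
        exact pow_le_pow_left₀ (abs_nonneg _) (hK r hr) 2
    _ = K ^ 2 * h ^ 3 / 3 := by
        rw [← intervalIntegral.integral_of_le hh, intervalIntegral.integral_const_mul,
          integral_pow]
        ring

theorem stmt10_general (k ktil : ℝ → ℝ)
    (hk : ContDiffOn ℝ 1 k (Ici 0)) (hktil : ContDiffOn ℝ 1 ktil (Ici 0)) :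
    ∃ C > 0, ∃ h₀ > 0, ∀ h : ℝ, 0 < h → h < h₀ →
      lambdaMin
        !![∫ r in Ioc (0 : ℝ) h, (k r) ^ 2, ∫ r in Ioc (0 : ℝ) h, k r * ktil r;
           ∫ r in Ioc (0 : ℝ) h, k r * ktil r, ∫ r in Ioc (0 : ℝ) h, (ktil r) ^ 2] ≤
      C * h ^ 2 := by
  obtain ⟨ξ, hξ, hξ0⟩ := exists_sum_sq_eq_one_and_orthogonal (k 0) (ktil 0)
  set φ : ℝ → ℝ := fun r => ξ 0 * k r + ξ 1 * ktil r with hφ_def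
  have hφ : ContDiffOn ℝ 1 φ (Ici 0) := (contDiffOn_const.mul hk).add (contDiffOn_const.mul hktil)
  obtain ⟨K, b, hb, hK⟩ := (hφ 0 self_mem_Ici).exists_norm_sub_le_mul_of_Ici
  refine ⟨K ^ 2 + 1, by positivity, min b 1, lt_min hb one_pos, fun h h0 hh => ?_⟩
  have hint {F : ℝ → ℝ} (hF : ContinuousOn F (Ici 0)) : IntegrableOn F (Ioc 0 h) :=
    (hF.mono Icc_subset_Ici_self).integrableOn_Icc.mono_set Ioc_subset_Icc_self
  have hk' := hk.continuousOn
  have hktil' := hktil.continuousOn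
  have hφ_bound : ∀ r ∈ Ioc 0 h, |φ r| ≤ K * r := fun r hr => by
    simpa [hφ_def, hξ0] using hK r ⟨hr.1.le, hr.2.trans (hh.le.trans (min_le_left _ _))⟩
  calc lambdaMin (gramL2 (volume.restrict (Ioc 0 h)) k ktil)
      ≤ ∫ r in Ioc 0 h, φ r ^ 2 :=
        lambdaMin_gramL2_le (hint (hk'.pow 2)) (hint (hk'.mul hktil')) (hint (hktil'.pow 2)) hξ
    _ ≤ K ^ 2 * h ^ 3 / 3 :=
        setIntegral_Ioc_sq_le_of_abs_le_mul h0.le (hint (hφ.continuousOn.pow 2)) hφ_bound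
    _ ≤ (K ^ 2 + 1) * h ^ 2 := by
        have : h ≤ 1 := hh.le.trans (min_le_right _ _)
        nlinarith [mul_nonneg (mul_nonneg (sq_nonneg K) (sq_nonneg h)) (sub_nonneg.2 this)]

/-- for continuously differentiable kernels `k, k̃` on `[0,∞)` with
`k(0) ≠ 0` and `k̃(0) ≠ 0`, the smallest eigenvalue of the Gram matrix
`M(h) = ∫_0^h [[k², k k̃], [k k̃, k̃²]] dr` is `O(h²)` as `h → 0+`. -/
theorem stmt10 (k ktil : ℝ → ℝ)
    (hk : ContDiffOn ℝ 1 k (Ici 0)) (hktil : ContDiffOn ℝ 1 ktil (Ici 0))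
    (hk0 : k 0 ≠ 0) (hktil0 : ktil 0 ≠ 0) :
    ∃ C > 0, ∃ h₀ > 0, ∀ h : ℝ, 0 < h → h < h₀ →
      lambdaMin
        !![∫ r in Ioc (0 : ℝ) h, (k r) ^ 2, ∫ r in Ioc (0 : ℝ) h, k r * ktil r;
           ∫ r in Ioc (0 : ℝ) h, k r * ktil r, ∫ r in Ioc (0 : ℝ) h, (ktil r) ^ 2] ≤
      C * h ^ 2 :=
  stmt10_general k ktil hk hktil
end

section
/- Let K : (0,∞) → ℝ be completely monotone and not identically zero (hence K > 0 and K is nonincreasing), let β ∈ ℝ, and let E : (0,∞) → ℝ be continuous and locally square-integrable on [0,∞) with E(t) = K(t) + β (K ∗ E)(t) for all t > 0, where (K ∗ E)(t) = ∫_0^t K(t−s) E(s) ds. Assume K ∗ E is continuous on [0,∞) with (K ∗ E)(0) = 0. Define f(z) = |β| · sup_{u ∈ (0, z]} |(K ∗ E)(u)| / K(z) for z > 0. Then f is well-defined and increasing with lim_{z→0+} f(z) = 0, and for every z > 0 and every u ∈ (0, z]: (1 − f(z)) K(u) ≤ E(u) ≤ (1 + f(z)) K(u). -/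
open MeasureTheory Filter Set

/-- A function `φ : (0,∞) → ℝ` is completely monotone if it is infinitely differentiable
on `(0,∞)` and `(−1)^n φ^{(n)}(t) ≥ 0` for all `n ≥ 0` and `t > 0`. -/
def CompletelyMonotone (φ : ℝ → ℝ) : Prop :=
  ContDiffOn ℝ (⊤ : ℕ∞) φ (Set.Ioi 0) ∧
    ∀ n : ℕ, ∀ t : ℝ, 0 < t → 0 ≤ (-1 : ℝ) ^ n * iteratedDeriv n φ t

/-- The convolution `(K ∗ E)(t) = ∫_0^t K(t − s) E(s) ds`. -/
noncomputable def conv (K E : ℝ → ℝ) (t : ℝ) : ℝ :=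
  ∫ s in Set.Ioc (0 : ℝ) t, K (t - s) * E s

/-- `f(z) = |β| · sup_{u ∈ (0,z]} |(K ∗ E)(u)| / K(z)`. -/
noncomputable def paperF (K E : ℝ → ℝ) (β z : ℝ) : ℝ :=
  |β| * sSup ((fun u => |conv K E u|) '' Set.Ioc (0 : ℝ) z) / K z

/-- for a completely monotone `K ≢ 0` (hence `K > 0` and nonincreasing) and
`E` continuous, locally square-integrable, with `E = K + β (K ∗ E)` and `K ∗ E` continuous
on `[0,∞)` vanishing at `0`, the function `f(z) = |β| sup_{u∈(0,z]} |(K∗E)(u)| / K(z)` is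
increasing with `f(0+) = 0`, and `(1 − f(z)) K(u) ≤ E(u) ≤ (1 + f(z)) K(u)` for every
`z > 0` and `u ∈ (0, z]`. -/
theorem stmt14 (K E : ℝ → ℝ) (β : ℝ)
    (hK : CompletelyMonotone K) (hKne : ¬ ∀ t : ℝ, 0 < t → K t = 0)
    (hKpos : ∀ t : ℝ, 0 < t → 0 < K t) (hKanti : AntitoneOn K (Ioi 0))
    (hEcont : ContinuousOn E (Ioi 0))
    (hEloc : ∀ T : ℝ, 0 < T → IntegrableOn (fun t => (E t) ^ 2) (Ioc 0 T))
    (hEeq : ∀ t : ℝ, 0 < t → E t = K t + β * conv K E t)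
    (hconvcont : ContinuousOn (conv K E) (Ici 0))
    (hconv0 : conv K E 0 = 0) :
    MonotoneOn (paperF K E β) (Ioi 0) ∧
      Tendsto (paperF K E β) (nhdsWithin 0 (Ioi 0)) (nhds 0) ∧
      ∀ z : ℝ, 0 < z → ∀ u ∈ Ioc (0 : ℝ) z,
        (1 - paperF K E β z) * K u ≤ E u ∧ E u ≤ (1 + paperF K E β z) * K u := by
  set S : ℝ → ℝ := fun z => sSup ((fun u => |conv K E u|) '' Set.Ioc (0 : ℝ) z) with hSdef
  have hne : ∀ z : ℝ, 0 < z → ((fun u => |conv K E u|) '' Set.Ioc (0 : ℝ) z).Nonempty := by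
    intro z hz
    exact ⟨|conv K E z|, z, ⟨hz, le_refl z⟩, rfl⟩
  have hBdd : ∀ z : ℝ, 0 < z → BddAbove ((fun u => |conv K E u|) '' Set.Ioc (0 : ℝ) z) := by
    intro z hz
    have hc : ContinuousOn (fun u => |conv K E u|) (Icc (0:ℝ) z) :=
      (hconvcont.mono (fun x hx => hx.1)).abs
    have := (isCompact_Icc (a := (0:ℝ)) (b := z)).bddAbove_image hc
    exact this.mono (image_mono Ioc_subset_Icc_self)
  have hle : ∀ z : ℝ, 0 < z → ∀ u ∈ Ioc (0:ℝ) z, |conv K E u| ≤ S z := by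
    intro z hz u hu
    exact le_csSup (hBdd z hz) ⟨u, hu, rfl⟩
  have hS0 : ∀ z : ℝ, 0 < z → 0 ≤ S z := by
    intro z hz
    exact le_trans (abs_nonneg _) (hle z hz z ⟨hz, le_refl z⟩)
  have hSmono : ∀ z₁ z₂ : ℝ, 0 < z₁ → z₁ ≤ z₂ → S z₁ ≤ S z₂ := by
    intro z₁ z₂ h1 h12
    exact csSup_le_csSup (hBdd z₂ (h1.trans_le h12)) (hne z₁ h1)
      (image_mono (Ioc_subset_Ioc_right h12))
  have hpF : ∀ z : ℝ, paperF K E β z = |β| * S z / K z := fun z => rfl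
  have hmono : MonotoneOn (paperF K E β) (Ioi 0) := by
    intro z₁ h1 z₂ h2 h12
    rw [hpF, hpF]
    rw [div_le_div_iff₀ (hKpos z₁ h1) (hKpos z₂ h2)]
    have h1' : (0:ℝ) < z₁ := h1
    have h2' : (0:ℝ) < z₂ := h2
    apply mul_le_mul
    · exact mul_le_mul_of_nonneg_left (hSmono z₁ z₂ h1' h12) (abs_nonneg β)
    · exact hKanti h1 h2 h12
    · exact (hKpos z₂ h2').le
    · exact mul_nonneg (abs_nonneg β) (hS0 z₂ h2')
  have hStend : Tendsto S (nhdsWithin 0 (Ioi 0)) (nhds 0) := by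
    rw [Metric.tendsto_nhdsWithin_nhds]
    intro ε hε
    have hc : ContinuousWithinAt (conv K E) (Ici 0) 0 := hconvcont 0 (mem_Ici.mpr (le_refl 0))
    rw [ContinuousWithinAt, Metric.tendsto_nhdsWithin_nhds] at hc
    obtain ⟨δ, hδ, hδ'⟩ := hc (ε/2) (by linarith)
    refine ⟨δ, hδ, ?_⟩
    intro z hz hzδ
    have hz' : (0:ℝ) < z := hz
    have hSle : S z ≤ ε/2 := by
      apply csSup_le (hne z hz')
      rintro b ⟨u, hu, rfl⟩
      have hud : dist u 0 < δ := by
        rw [Real.dist_eq, sub_zero, abs_of_pos hu.1]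
        calc u ≤ z := hu.2
        _ < δ := by rwa [Real.dist_eq, sub_zero, abs_of_pos hz'] at hzδ
      have := hδ' (mem_Ici.mpr hu.1.le) hud
      rw [hconv0, Real.dist_eq, sub_zero] at this
      exact this.le
    rw [Real.dist_eq, sub_zero, abs_of_nonneg (hS0 z hz')]
    linarith
  have htend : Tendsto (paperF K E β) (nhdsWithin 0 (Ioi 0)) (nhds 0) := by
    have hev : ∀ᶠ z in nhdsWithin (0:ℝ) (Ioi 0), z ∈ Ioo (0:ℝ) 1 :=
      Ioo_mem_nhdsGT one_pos
    apply squeeze_zero' (g := fun z => (|β| / K 1) * S z)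
    · filter_upwards [hev] with z hz
      rw [hpF]
      exact div_nonneg (mul_nonneg (abs_nonneg β) (hS0 z hz.1)) (hKpos z hz.1).le
    · filter_upwards [hev] with z hz
      rw [hpF]
      have hK1 : (0:ℝ) < K 1 := hKpos 1 one_pos
      have hKz1 : K 1 ≤ K z := hKanti hz.1 (mem_Ioi.mpr one_pos) hz.2.le
      calc |β| * S z / K z ≤ |β| * S z / K 1 := by
            gcongr
            exact mul_nonneg (abs_nonneg β) (hS0 z hz.1)
        _ = (|β| / K 1) * S z := by ring
    · have : Tendsto (fun z => (|β| / K 1) * S z) (nhdsWithin 0 (Ioi 0)) (nhds ((|β| / K 1) * 0)) :=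
        hStend.const_mul _
      simpa using this
  refine ⟨hmono, htend, ?_⟩
  intro z hz u hu
  have hu0 : (0:ℝ) < u := hu.1
  have hKu : 0 < K u := hKpos u hu0
  have hKz : 0 < K z := hKpos z hz
  have hKzu : K z ≤ K u := hKanti hu0 hz hu.2
  have hkey : |β * conv K E u| ≤ paperF K E β z * K u := by
    rw [hpF, div_mul_eq_mul_div, le_div_iff₀ hKz, abs_mul]
    calc |β| * |conv K E u| * K z ≤ |β| * S z * K u := by
          apply mul_le_mul
          · exact mul_le_mul_of_nonneg_left (hle z hz u hu) (abs_nonneg β)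
          · exact hKzu
          · exact hKz.le
          · exact mul_nonneg (abs_nonneg β) (hS0 z hz)
      _ = |β| * S z * K u := rfl
  have hE : E u = K u + β * conv K E u := hEeq u hu0
  rw [abs_le] at hkey
  constructor
  · nlinarith [hkey.1]
  · nlinarith [hkey.2]
end
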